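/- The quotient of the set of EQ-formulas over L by the equivalence relation ≈ (where E ≈ E' iff E ↔ E' is true in every model of FEA(L)), partially ordered by the relation induced by ≼ (where E ≼ E' iff E → E' is true in every model of FEA(L)), is a complete lattice; its smallest element is the class of False and its greatest element is the class of True. -/

import Mathlib

/-- A first-order language: function symbols with arities and predicate
symbols with arities.  Variables are natural numbers. -/
structure FOLang where
  Func : Type
  farity : Func → ℕ
  Pred : Type
  parity : Pred → ℕ

/-- The language has at least one constant. -/
def FOLang.HasConst (L : FOLang) : Prop := ∃ f : L.Func, L.farity f = 0

/-- Terms over a language. -/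
inductive FOTerm (L : FOLang) : Type where
  | var : ℕ → FOTerm L
  | func : (f : L.Func) → (Fin (L.farity f) → FOTerm L) → FOTerm L

namespace FOTerm

variable {L : FOLang}

/-- The (finite) set of variables occurring in a term. -/
def vars : FOTerm L → Finset ℕ
  | .var x => {x}
  | .func _ ts => Finset.univ.biUnion fun i => (ts i).vars

/-- Application of a (total) substitution to a term: simultaneously replace
every variable `x` by the term `f x`. -/
def applyT (f : ℕ → FOTerm L) : FOTerm L → FOTerm L
  | .var x => f x
  | .func g ts => .func g fun i => (ts i).applyT f

end FOTerm

/-- A pre-interpretation: a non-empty universe together with an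
interpretation of the function symbols. -/
structure FOStruc (L : FOLang) where
  carrier : Type
  inhab : Nonempty carrier
  funcs : (f : L.Func) → (Fin (L.farity f) → carrier) → carrier

/-- Evaluation of a term under a valuation. -/
def FOTerm.eval {L : FOLang} (M : FOStruc L) (h : ℕ → M.carrier) : FOTerm L → M.carrier
  | .var x => h x
  | .func f ts => M.funcs f fun i => (ts i).eval M h

/-- The set of `M`-instances of a term: values of the term under all
valuations. -/
def InstT {L : FOLang} (M : FOStruc L) (t : FOTerm L) : Set M.carrier :=
  { a | ∃ h : ℕ → M.carrier, t.eval M h = a }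

/-- `M` is a model of the free equality axioms `FEA(L)`. -/
structure IsFEA {L : FOLang} (M : FOStruc L) : Prop where
  inj : ∀ f : L.Func, Function.Injective (M.funcs f)
  disj : ∀ f g : L.Func, f ≠ g → ∀ a b, M.funcs f a ≠ M.funcs g b
  occ : ∀ (x : ℕ) (t : FOTerm L), t ≠ .var x → x ∈ t.vars →
      ∀ h : ℕ → M.carrier, h x ≠ t.eval M h

/-- The domain has at least two elements. -/
def FOStruc.Nontriv {L : FOLang} (M : FOStruc L) : Prop :=
  ∃ a b : M.carrier, a ≠ b

/-- The difference set `Diff(s,t)`: `InDiff s t (s',t')` means the pair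
`(s',t')` belongs to `Diff(s,t)`. -/
inductive InDiff {L : FOLang} : FOTerm L → FOTerm L → FOTerm L × FOTerm L → Prop where
  | var (x : ℕ) : InDiff (.var x) (.var x) (.var x, .var x)
  | varVar {x y : ℕ} : x ≠ y → InDiff (.var x) (.var y) (.var x, .var y)
  | varFunc (x : ℕ) (f : L.Func) (ts : Fin (L.farity f) → FOTerm L) :
      InDiff (.var x) (.func f ts) (.var x, .func f ts)
  | funcVar (f : L.Func) (ss : Fin (L.farity f) → FOTerm L) (y : ℕ) :
      InDiff (.func f ss) (.var y) (.func f ss, .var y)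
  | funcFunc {f g : L.Func} (ss : Fin (L.farity f) → FOTerm L)
      (ts : Fin (L.farity g) → FOTerm L) : f ≠ g →
      InDiff (.func f ss) (.func g ts) (.func f ss, .func g ts)
  | func {f : L.Func} (ss ts : Fin (L.farity f) → FOTerm L) (i : Fin (L.farity f))
      {p : FOTerm L × FOTerm L} :
      InDiff (ss i) (ts i) p → InDiff (.func f ss) (.func f ts) p
/-- An interpretation: a pre-interpretation together with an interpretation
of the predicate symbols. -/
structure FOInterp (L : FOLang) extends FOStruc L where
  preds : (p : L.Pred) → (Fin (L.parity p) → carrier) → Prop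

/-- First-order formulas. -/
inductive FOForm (L : FOLang) : Type where
  | tru : FOForm L
  | fal : FOForm L
  | eq : FOTerm L → FOTerm L → FOForm L
  | atom : (p : L.Pred) → (Fin (L.parity p) → FOTerm L) → FOForm L
  | not : FOForm L → FOForm L
  | and : FOForm L → FOForm L → FOForm L
  | or : FOForm L → FOForm L → FOForm L
  | imp : FOForm L → FOForm L → FOForm L
  | iff : FOForm L → FOForm L → FOForm L
  | ex : ℕ → FOForm L → FOForm L
  | all : ℕ → FOForm L → FOForm L

namespace FOForm

variable {L : FOLang}

/-- Tarskian satisfaction of a formula in an interpretation under a valuation. -/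
def Sat (I : FOInterp L) (h : ℕ → I.carrier) : FOForm L → Prop
  | .tru => True
  | .fal => False
  | .eq s t => s.eval I.toFOStruc h = t.eval I.toFOStruc h
  | .atom p ts => I.preds p fun i => (ts i).eval I.toFOStruc h
  | .not F => ¬ F.Sat I h
  | .and F G => F.Sat I h ∧ G.Sat I h
  | .or F G => F.Sat I h ∨ G.Sat I h
  | .imp F G => F.Sat I h → G.Sat I h
  | .iff F G => F.Sat I h ↔ G.Sat I h
  | .ex x F => ∃ d : I.carrier, F.Sat I (Function.update h x d)
  | .all x F => ∀ d : I.carrier, F.Sat I (Function.update h x d)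

/-- Free variables of a formula. -/
def fv : FOForm L → Finset ℕ
  | .tru => ∅
  | .fal => ∅
  | .eq s t => s.vars ∪ t.vars
  | .atom _ ts => Finset.univ.biUnion fun i => (ts i).vars
  | .not F => F.fv
  | .and F G => F.fv ∪ G.fv
  | .or F G => F.fv ∪ G.fv
  | .imp F G => F.fv ∪ G.fv
  | .iff F G => F.fv ∪ G.fv
  | .ex x F => F.fv.erase x
  | .all x F => F.fv.erase x

end FOForm

/-- The interpretation obtained from a pre-interpretation by interpreting
every predicate symbol as the empty relation (for formulas without atoms
the choice is irrelevant). -/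
def FOStruc.toInterp {L : FOLang} (M : FOStruc L) : FOInterp L :=
  { toFOStruc := M, preds := fun _ _ => False }

/-- Satisfaction of an (equational) formula in a pre-interpretation. -/
def ESat {L : FOLang} (M : FOStruc L) (h : ℕ → M.carrier) (F : FOForm L) : Prop :=
  F.Sat M.toInterp h

/-- The set of solutions of a formula in a pre-interpretation. -/
def SolE {L : FOLang} (M : FOStruc L) (F : FOForm L) : Set (ℕ → M.carrier) :=
  { h | ESat M h F }

/-- EQ-formulas: built from `True`, `False` and equations using `∧` and `∃`. -/
inductive IsEQ {L : FOLang} : FOForm L → Prop where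
  | tru : IsEQ .tru
  | fal : IsEQ .fal
  | eq (s t : FOTerm L) : IsEQ (.eq s t)
  | and {F G : FOForm L} : IsEQ F → IsEQ G → IsEQ (.and F G)
  | ex (x : ℕ) {F : FOForm L} : IsEQ F → IsEQ (.ex x F)

/-- Equational formulas: first-order formulas with no atoms other than
equations. -/
inductive IsEquational {L : FOLang} : FOForm L → Prop where
  | tru : IsEquational .tru
  | fal : IsEquational .fal
  | eq (s t : FOTerm L) : IsEquational (.eq s t)
  | not {F : FOForm L} : IsEquational F → IsEquational (.not F)
  | and {F G : FOForm L} : IsEquational F → IsEquational G → IsEquational (.and F G)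
  | or {F G : FOForm L} : IsEquational F → IsEquational G → IsEquational (.or F G)
  | imp {F G : FOForm L} : IsEquational F → IsEquational G → IsEquational (.imp F G)
  | iff {F G : FOForm L} : IsEquational F → IsEquational G → IsEquational (.iff F G)
  | ex (x : ℕ) {F : FOForm L} : IsEquational F → IsEquational (.ex x F)
  | all (x : ℕ) {F : FOForm L} : IsEquational F → IsEquational (.all x F)

/-- `F ≼ F'` : `F → F'` is true in every model of `FEA(L)`. -/
def EQle {L : FOLang} (F F' : FOForm L) : Prop :=
  ∀ M : FOStruc L, IsFEA M → ∀ h : ℕ → M.carrier, ESat M h F → ESat M h F'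

/-- `F ≈ F'` : `F ↔ F'` is true in every model of `FEA(L)`. -/
def EQequiv {L : FOLang} (F F' : FOForm L) : Prop := EQle F F' ∧ EQle F' F

/-- `F ≺ F'`. -/
def EQlt {L : FOLang} (F F' : FOForm L) : Prop := EQle F F' ∧ ¬ EQequiv F F'

/-- The conjunction `x₁ = s₁ ∧ … ∧ xₙ = sₙ`. -/
def conjOf {L : FOLang} : List (ℕ × FOTerm L) → FOForm L
  | [] => .tru
  | [p] => .eq (.var p.1) p.2
  | p :: rest => .and (.eq (.var p.1) p.2) (conjOf rest)

/-- The formula `(∃ z₁) … (∃ z_k) F`. -/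
def exOf {L : FOLang} (zs : List ℕ) (F : FOForm L) : FOForm L :=
  zs.foldr .ex F

/-- The disjunction `F₁ ∨ … ∨ Fₙ`. -/
def disjOf {L : FOLang} : List (FOForm L) → FOForm L
  | [] => .fal
  | [F] => F
  | F :: rest => .or F (disjOf rest)

/-- A formula is in solved form if it is `True`, `False`, or of the shape
`∃ z₁ … ∃ z_k (x₁ = s₁ ∧ … ∧ xₙ = sₙ)` where the `xᵢ` and `z_j` are
pairwise distinct, no `xᵢ` occurs in any right-hand side, every `z_j`
occurs in the conjunction, and no `sᵢ` is one of the `z_j`. -/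
def SolvedForm {L : FOLang} (F : FOForm L) : Prop :=
  F = .tru ∨ F = .fal ∨
    ∃ (zs : List ℕ) (eqs : List (ℕ × FOTerm L)),
      eqs ≠ [] ∧
      F = exOf zs (conjOf eqs) ∧
      (eqs.map Prod.fst ++ zs).Nodup ∧
      (∀ p ∈ eqs, ∀ q ∈ eqs, p.1 ∉ q.2.vars) ∧
      (∀ z ∈ zs, ∃ p ∈ eqs, z ∈ p.2.vars) ∧
      (∀ z ∈ zs, ∀ p ∈ eqs, p.2 ≠ .var z)

/-- The projection of an EQ-formula onto a finite set of variables: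
existentially quantify the free variables not in `X`; the projection of
`False` is `False`. -/
def projE {L : FOLang} (E : FOForm L) (X : Finset ℕ) : FOForm L :=
  match E with
  | .fal => .fal
  | E => exOf ((E.fv \ X).sort (· ≤ ·)) E

/-- The universal closure of a formula. -/
def univClosure {L : FOLang} (F : FOForm L) : FOForm L :=
  (F.fv.sort (· ≤ ·)).foldr .all F

/-- A formula is valid if it is true in every interpretation (under every
valuation). -/
def FOValid {L : FOLang} (F : FOForm L) : Prop :=
  ∀ (I : FOInterp L) (h : ℕ → I.carrier), F.Sat I h

/-- An EQ-formula is consistent if it has a solution in some model of the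
free equality axioms. -/
def EQConsistent {L : FOLang} (E : FOForm L) : Prop :=
  ∃ M : FOStruc L, IsFEA M ∧ ∃ h : ℕ → M.carrier, ESat M h E
/-- Ground terms: terms with no variables. -/
def GroundTerm (L : FOLang) : Type := { t : FOTerm L // t.vars = ∅ }

/-- The Herbrand pre-interpretation: its domain is the set of ground terms
and function symbols are interpreted formally. -/
def Herbrand (L : FOLang) (hc : L.HasConst) : FOStruc L where
  carrier := GroundTerm L
  inhab := by
    obtain ⟨f, hf⟩ := hc
    refine ⟨⟨.func f (fun i => Fin.elim0 (Fin.cast hf i)), ?_⟩⟩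
    ext x
    simp only [FOTerm.vars, Finset.mem_biUnion, Finset.mem_univ, true_and,
      Finset.notMem_empty, iff_false, not_exists]
    intro i
    exact Fin.elim0 (Fin.cast hf i)
  funcs := fun f ts => ⟨.func f (fun i => (ts i).1), by
    ext x
    simp only [FOTerm.vars, Finset.mem_biUnion, Finset.mem_univ, true_and,
      Finset.notMem_empty, iff_false, not_exists]
    intro i hx
    rw [(ts i).2] at hx
    exact Finset.notMem_empty x hx⟩

/-- The language obtained by adding a countably infinite set of new
constants. -/
def addConsts (L : FOLang) : FOLang where
  Func := L.Func ⊕ ℕ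
  farity := Sum.elim L.farity fun _ => 0
  Pred := L.Pred
  parity := L.parity

/-- The canonical embedding of terms into the extended language. -/
def FOTerm.lift {L : FOLang} : FOTerm L → FOTerm (addConsts L)
  | .var x => .var x
  | .func f ts => .func (Sum.inl f) fun i => (ts i).lift

/-- The canonical embedding of formulas into the extended language. -/
def FOForm.lift {L : FOLang} : FOForm L → FOForm (addConsts L)
  | .tru => .tru
  | .fal => .fal
  | .eq s t => .eq s.lift t.lift
  | .atom p ts => .atom p fun i => (ts i).lift
  | .not F => .not F.lift
  | .and F G => .and F.lift G.lift
  | .or F G => .or F.lift G.lift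
  | .imp F G => .imp F.lift G.lift
  | .iff F G => .iff F.lift G.lift
  | .ex x F => .ex x F.lift
  | .all x F => .all x F.lift
/-- A finite substitution: a finite set of variables (its domain) together
with an assignment of terms to variables which is the identity outside the
domain. -/
structure FinSubst (L : FOLang) where
  dom : Finset ℕ
  map : ℕ → FOTerm L
  outside : ∀ x ∉ dom, map x = .var x

namespace FinSubst

variable {L : FOLang}

/-- `Range(σ)`: the set of variables occurring in the terms `σ x`, `x ∈ Dom(σ)`. -/
def range (σ : FinSubst L) : Finset ℕ :=
  σ.dom.biUnion fun x => (σ.map x).vars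

/-- `θ` is an extension of `σ`. -/
def Extends (θ σ : FinSubst L) : Prop :=
  σ.dom ⊆ θ.dom ∧ ∀ x ∈ σ.dom, θ.map x = σ.map x

/-- `θ` is a regular extension of `σ`: it extends `σ` and maps
`Dom(θ) \ Dom(σ)` injectively into the variables not in `Range(σ)`. -/
def RegExt (θ σ : FinSubst L) : Prop :=
  Extends θ σ ∧
  (∀ x ∈ θ.dom, x ∉ σ.dom → ∃ y : ℕ, y ∉ σ.range ∧ θ.map x = .var y) ∧
  Set.InjOn θ.map ↑(θ.dom \ σ.dom)

/-- The set of `M`-instances of a substitution. -/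
def Inst {L : FOLang} (M : FOStruc L) (σ : FinSubst L) : Set (ℕ → M.carrier) :=
  { h | ∃ g : ℕ → M.carrier, ∀ x ∈ σ.dom, h x = (σ.map x).eval M g }

open Classical in
/-- The restriction of `σ` to `Dom(σ) ∩ X`. -/
noncomputable def restrict (σ : FinSubst L) (X : Set ℕ) : FinSubst L where
  dom := σ.dom.filter fun x => x ∈ X
  map := fun x => if x ∈ σ.dom ∧ x ∈ X then σ.map x else .var x
  outside := fun x hx => if_neg fun h => hx (Finset.mem_filter.2 ⟨h.1, h.2⟩)

/-- The composition `σθ`, defined on `Dom(σ)` by `x ↦ (σ x)θ`. -/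
def comp (σ θ : FinSubst L) : FinSubst L where
  dom := σ.dom
  map := fun x => if x ∈ σ.dom then (σ.map x).applyT θ.map else .var x
  outside := fun _ hx => if_neg hx

/-- `σ ≼ θ` : `θ` is more general than `σ`. -/
def Le (σ θ : FinSubst L) : Prop :=
  ∃ σ' θ' τ : FinSubst L,
    RegExt σ' σ ∧ RegExt θ' θ ∧ σ'.dom = θ'.dom ∧
    θ'.range ⊆ τ.dom ∧ σ' = θ'.comp τ

/-- `σ ≈ θ`. -/
def Equiv (σ θ : FinSubst L) : Prop := Le σ θ ∧ Le θ σ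

/-- A permutation: a substitution mapping its domain injectively to
variables. -/
def IsPerm (τ : FinSubst L) : Prop :=
  (∀ x ∈ τ.dom, ∃ y : ℕ, τ.map x = .var y) ∧ Set.InjOn τ.map ↑τ.dom

/-- The empty substitution. -/
def empty (L : FOLang) : FinSubst L where
  dom := ∅
  map := fun x => .var x
  outside := fun _ _ => rfl

/-- The kernel of a substitution: the intersection of all sets `X` of
variables such that `σ↾X ≈ σ`. -/
def kernel (σ : FinSubst L) : Set ℕ :=
  ⋂₀ { X : Set ℕ | Equiv (σ.restrict X) σ }

end FinSubst

noncomputable section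

theorem exists_notin_finset (s : Finset ℕ) : ∃ n : ℕ, n ∉ s :=
  ⟨s.sup id + 1, fun h => by
    have := Finset.le_sup (f := id) h
    simp only [id] at this
    omega⟩

/-- The first variable not belonging to a given finite set of variables. -/
def freshVar (s : Finset ℕ) : ℕ := Nat.find (exists_notin_finset s)

/-- Insert a binding into a substitution. -/
def FinSubst.insertB {L : FOLang} (σ : FinSubst L) (x : ℕ) (t : FOTerm L) :
    FinSubst L where
  dom := insert x σ.dom
  map := Function.update σ.map x t
  outside := by
    intro z hz
    have hzx : z ≠ x := fun h => hz (h ▸ Finset.mem_insert_self x σ.dom)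
    have hzd : z ∉ σ.dom := fun h => hz (Finset.mem_insert_of_mem h)
    rw [Function.update_of_ne hzx]
    exact σ.outside z hzd

/-- One step of the regular-extension procedure: extend the substitution
with a binding for `x` (to itself if possible, otherwise to the first
variable not occurring in the range). -/
def regStep {L : FOLang} (acc : FinSubst L) (x : ℕ) : FinSubst L :=
  if x ∈ acc.dom then acc
  else acc.insertB x (.var (if x ∈ acc.range then freshVar acc.range else x))

/-- Restrict `σ` to the free variables of `F` and extend the result
regularly to a substitution whose domain is exactly `fv F`. -/
def FinSubst.extendFV {L : FOLang} (σ : FinSubst L) (F : FOForm L) : FinSubst L :=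
  (F.fv.sort (· ≤ ·)).foldl regStep (σ.restrict ↑F.fv)

/-- Capture-avoiding simultaneous substitution on formulas (bound variables
are renamed as needed). -/
def FOForm.applyF {L : FOLang} (f : ℕ → FOTerm L) : FOForm L → FOForm L
  | .tru => .tru
  | .fal => .fal
  | .eq s t => .eq (s.applyT f) (t.applyT f)
  | .atom p ts => .atom p fun i => (ts i).applyT f
  | .not F => .not (F.applyF f)
  | .and F G => .and (F.applyF f) (G.applyF f)
  | .or F G => .or (F.applyF f) (G.applyF f)
  | .imp F G => .imp (F.applyF f) (G.applyF f)
  | .iff F G => .iff (F.applyF f) (G.applyF f)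
  | .ex x G =>
      let R : Finset ℕ := (G.fv.erase x).biUnion fun z => (f z).vars
      let y : ℕ := if x ∈ R then freshVar R else x
      .ex y (G.applyF (Function.update f x (.var y)))
  | .all x G =>
      let R : Finset ℕ := (G.fv.erase x).biUnion fun z => (f z).vars
      let y : ℕ := if x ∈ R then freshVar R else x
      .all y (G.applyF (Function.update f x (.var y)))

/-- The application `Fσ` of a finite substitution to a formula: restrict
`σ` to the free variables of `F`, extend regularly to all of `fv F`, and
substitute capture-avoidingly. -/
def FOForm.applyS {L : FOLang} (σ : FinSubst L) (F : FOForm L) : FOForm L :=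
  F.applyF (σ.extendFV F).map

end
/-- The set of finite substitutions together with an added bottom element
`⊥` (represented by `none`): the extended preorder. -/
def LeBot {L : FOLang} : Option (FinSubst L) → Option (FinSubst L) → Prop
  | none, _ => True
  | some _, none => False
  | some σ, some θ => FinSubst.Le σ θ

/-- The induced equivalence on `Subst⊥`. -/
def EquivBot {L : FOLang} (a b : Option (FinSubst L)) : Prop :=
  LeBot a b ∧ LeBot b a

/-- The quotient of `Subst⊥` by `≈`. -/
def SubstQuot (L : FOLang) : Type := Quot (EquivBot (L := L))

/-- The induced partial order on the quotient `Subst⊥/≈`. -/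
def SubstQuotLe {L : FOLang} (a b : SubstQuot L) : Prop :=
  ∃ s t : Option (FinSubst L), Quot.mk _ s = a ∧ Quot.mk _ t = b ∧ LeBot s t

/-- EQ-formulas as a subtype. -/
def EQSub (L : FOLang) : Type := { F : FOForm L // IsEQ F }

/-- The quotient of the set of EQ-formulas by `≈`. -/
def EQQuot (L : FOLang) : Type :=
  Quot (fun a b : EQSub L => EQequiv a.1 b.1)

/-- The induced partial order on the quotient of EQ-formulas. -/
def EQQuotLe {L : FOLang} (a b : EQQuot L) : Prop :=
  ∃ E E' : EQSub L, Quot.mk _ E = a ∧ Quot.mk _ E' = b ∧ EQle E.1 E'.1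

/-- The substitution `{x₁↦s₁, …, xₙ↦sₙ, y₁↦y₁, …, y_k↦y_k}` associated
with a solved form with equations `eqs` and parameters `params`. -/
theorem lookup_eq_none_of_not_mem {L : FOLang} (x : ℕ) :
    ∀ eqs : List (ℕ × FOTerm L), x ∉ eqs.map Prod.fst → eqs.lookup x = none := by
  intro eqs
  induction eqs with
  | nil => intro _; rfl
  | cons p rest ih =>
    intro hx1
    have hp : p.1 ≠ x := by
      intro h
      exact hx1 (by simp [h])
    have hr : x ∉ rest.map Prod.fst := fun h => hx1 (by simp [h])
    have hxp : (x == p.1) = false := beq_eq_false_iff_ne.mpr fun h => hp h.symm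
    simp only [List.lookup, hxp]
    exact ih hr

def solvedSubst {L : FOLang} (eqs : List (ℕ × FOTerm L)) (params : Finset ℕ) :
    FinSubst L where
  dom := (eqs.map Prod.fst).toFinset ∪ params
  map := fun x => (eqs.lookup x).getD (.var x)
  outside := by
    intro x hx
    have hx1 : x ∉ eqs.map Prod.fst := fun h =>
      hx (Finset.mem_union_left _ (List.mem_toFinset.2 h))
    simp [lookup_eq_none_of_not_mem x eqs hx1]
/-! ### Auxiliary development for Statement 6 -/

section Aux

open Classical

variable {L : FOLang}

namespace FOTerm

/-- Size of a term. -/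
def size : FOTerm L → ℕ
  | .var _ => 1
  | .func _ ts => 1 + ∑ i, (ts i).size

theorem one_le_size (t : FOTerm L) : 1 ≤ t.size := by
  cases t <;> simp [size]

theorem applyT_var (t : FOTerm L) : t.applyT .var = t := by
  induction t with
  | var x => rfl
  | func f ts ih => simp only [applyT]; exact congrArg _ (funext fun i => ih i)

theorem applyT_applyT (t : FOTerm L) (σ τ : ℕ → FOTerm L) :
    (t.applyT σ).applyT τ = t.applyT (fun x => (σ x).applyT τ) := by
  induction t with
  | var x => rfl
  | func f ts ih => simp only [applyT]; exact congrArg _ (funext fun i => ih i)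

theorem eval_applyT (t : FOTerm L) (σ : ℕ → FOTerm L) (M : FOStruc L)
    (h : ℕ → M.carrier) :
    (t.applyT σ).eval M h = t.eval M (fun x => (σ x).eval M h) := by
  induction t with
  | var x => rfl
  | func f ts ih => simp only [applyT, eval]; exact congrArg _ (funext fun i => ih i)

theorem vars_applyT (t : FOTerm L) (σ : ℕ → FOTerm L) :
    (t.applyT σ).vars = t.vars.biUnion fun x => (σ x).vars := by
  induction t with
  | var x => simp [applyT, vars]
  | func f ts ih =>
    simp only [applyT, vars, ih]
    ext y
    simp only [Finset.mem_biUnion, Finset.mem_univ, true_and]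
    constructor
    · rintro ⟨i, x, hx, hy⟩; exact ⟨x, ⟨i, hx⟩, hy⟩
    · rintro ⟨x, ⟨i, hx⟩, hy⟩; exact ⟨i, x, hx, hy⟩

theorem eval_congr (t : FOTerm L) (M : FOStruc L) {h h' : ℕ → M.carrier}
    (H : ∀ x ∈ t.vars, h x = h' x) : t.eval M h = t.eval M h' := by
  induction t with
  | var x => exact H x (by simp [vars])
  | func f ts ih =>
    simp only [eval]
    exact congrArg _ (funext fun i => ih i fun x hx =>
      H x (by simp only [vars, Finset.mem_biUnion]; exact ⟨i, Finset.mem_univ i, hx⟩))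

theorem applyT_congr (t : FOTerm L) {σ τ : ℕ → FOTerm L}
    (H : ∀ x ∈ t.vars, σ x = τ x) : t.applyT σ = t.applyT τ := by
  induction t with
  | var x => exact H x (by simp [vars])
  | func f ts ih =>
    simp only [applyT]
    exact congrArg _ (funext fun i => ih i fun x hx =>
      H x (by simp only [vars, Finset.mem_biUnion]; exact ⟨i, Finset.mem_univ i, hx⟩))

theorem size_le_size_applyT (t : FOTerm L) (σ : ℕ → FOTerm L) :
    t.size ≤ (t.applyT σ).size := by
  induction t with
  | var x => exact one_le_size _
  | func f ts ih =>
    simp only [applyT, size]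
    exact Nat.add_le_add_left (Finset.sum_le_sum fun i _ => ih i) 1

theorem size_applyT_le_of_mem {x : ℕ} {t : FOTerm L} (hx : x ∈ t.vars)
    (σ : ℕ → FOTerm L) : (σ x).size ≤ (t.applyT σ).size := by
  induction t with
  | var y =>
    simp only [vars, Finset.mem_singleton] at hx
    subst hx; exact le_rfl
  | func f ts ih =>
    simp only [vars, Finset.mem_biUnion, Finset.mem_univ, true_and] at hx
    obtain ⟨i, hi⟩ := hx
    calc (σ x).size ≤ ((ts i).applyT σ).size := ih i hi
    _ ≤ 1 + ∑ j, ((ts j).applyT σ).size := by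
        have h2 : ((ts i).applyT σ).size ≤ ∑ j, ((ts j).applyT σ).size :=
          Finset.single_le_sum (f := fun j => ((ts j).applyT σ).size)
            (fun j _ => Nat.zero_le _) (Finset.mem_univ i)
        omega
    _ = ((FOTerm.func f ts).applyT σ).size := rfl

theorem size_applyT_lt {x : ℕ} {f : L.Func} {ts : Fin (L.farity f) → FOTerm L}
    (hx : x ∈ (FOTerm.func f ts).vars) (σ : ℕ → FOTerm L) :
    (σ x).size < ((FOTerm.func f ts).applyT σ).size := by
  simp only [vars, Finset.mem_biUnion, Finset.mem_univ, true_and] at hx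
  obtain ⟨i, hi⟩ := hx
  calc (σ x).size ≤ ((ts i).applyT σ).size := size_applyT_le_of_mem hi σ
  _ < 1 + ∑ j, ((ts j).applyT σ).size := by
      have h2 : ((ts i).applyT σ).size ≤ ∑ j, ((ts j).applyT σ).size :=
        Finset.single_le_sum (f := fun j => ((ts j).applyT σ).size)
          (fun j _ => Nat.zero_le _) (Finset.mem_univ i)
      omega

theorem card_vars_le_size (t : FOTerm L) : t.vars.card ≤ t.size := by
  induction t with
  | var x => simp [vars, size]
  | func f ts ih =>
    simp only [vars, size]
    calc (Finset.univ.biUnion fun i => (ts i).vars).card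
        ≤ ∑ i, (ts i).vars.card := Finset.card_biUnion_le
      _ ≤ ∑ i, (ts i).size := Finset.sum_le_sum fun i _ => ih i
      _ ≤ 1 + ∑ i, (ts i).size := by omega

/-- The function symbols occurring in a term. -/
noncomputable def symbols : FOTerm L → Finset L.Func
  | .var _ => ∅
  | .func f ts => insert f (Finset.univ.biUnion fun i => (ts i).symbols)

theorem symbols_applyT (t : FOTerm L) (σ : ℕ → FOTerm L) :
    t.symbols ⊆ (t.applyT σ).symbols := by
  induction t with
  | var x => simp [symbols]
  | func f ts ih =>
    intro g hg
    simp only [symbols, Finset.mem_insert, Finset.mem_biUnion, Finset.mem_univ,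
      true_and] at hg
    simp only [applyT, symbols, Finset.mem_insert, Finset.mem_biUnion,
      Finset.mem_univ, true_and]
    rcases hg with rfl | ⟨i, hi⟩
    · exact Or.inl rfl
    · exact Or.inr ⟨i, ih i hi⟩

theorem symbols_applyT_vars (t : FOTerm L) (σ : ℕ → FOTerm L)
    (h : ∀ x ∈ t.vars, ∃ y, σ x = .var y) :
    (t.applyT σ).symbols = t.symbols := by
  induction t with
  | var x =>
    obtain ⟨y, hy⟩ := h x (by simp [vars])
    simp [applyT, hy, symbols]
  | func f ts ih =>
    simp only [applyT, symbols]
    congr 1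
    refine Finset.biUnion_congr rfl fun i _ => ih i fun x hx => h x ?_
    simp only [vars, Finset.mem_biUnion, Finset.mem_univ, true_and]
    exact ⟨i, hx⟩

theorem size_applyT_vars (t : FOTerm L) (σ : ℕ → FOTerm L)
    (h : ∀ x ∈ t.vars, ∃ y, σ x = .var y) :
    (t.applyT σ).size = t.size := by
  induction t with
  | var x =>
    obtain ⟨y, hy⟩ := h x (by simp [vars])
    simp [applyT, hy, size]
  | func f ts ih =>
    simp only [applyT, size]
    congr 1
    refine Finset.sum_congr rfl fun i _ => ih i fun x hx => h x ?_
    simp only [vars, Finset.mem_biUnion, Finset.mem_univ, true_and]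
    exact ⟨i, hx⟩

end FOTerm

/-- The term model: carrier is the set of all terms. -/
def TermModel (L : FOLang) : FOStruc L where
  carrier := FOTerm L
  inhab := ⟨.var 0⟩
  funcs := FOTerm.func

theorem eval_termModel (t : FOTerm L) (σ : ℕ → FOTerm L) :
    t.eval (TermModel L) σ = t.applyT σ := by
  induction t with
  | var x => rfl
  | func f ts ih =>
    simp only [FOTerm.eval, FOTerm.applyT]
    exact congrArg _ (funext fun i => ih i)

theorem termModel_isFEA : IsFEA (TermModel L) := by
  constructor
  · intro f a b hab
    have := (FOTerm.func.injEq f a f b).mp hab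
    exact eq_of_heq this.2
  · intro f g hfg a b hab
    exact hfg ((FOTerm.func.injEq f a g b).mp hab).1
  · intro x t ht hx h
    intro hcontra
    rw [eval_termModel t h] at hcontra
    cases t with
    | var y =>
      simp only [FOTerm.vars, Finset.mem_singleton] at hx
      exact ht (by rw [hx])
    | func f ts =>
      have := FOTerm.size_applyT_lt hx h
      rw [← hcontra] at this
      exact lt_irrefl _ this

/-- Satisfaction only depends on the free variables. -/
theorem sat_congr (F : FOForm L) (I : FOInterp L) :
    ∀ {h h' : ℕ → I.carrier}, (∀ x ∈ F.fv, h x = h' x) → (F.Sat I h ↔ F.Sat I h') := by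
  induction F with
  | tru => intro h h' _; simp [FOForm.Sat]
  | fal => intro h h' _; simp [FOForm.Sat]
  | eq s t =>
    intro h h' H
    simp only [FOForm.Sat]
    rw [FOTerm.eval_congr (M := I.toFOStruc) s
        (fun x hx => H x (by simp [FOForm.fv, hx])),
      FOTerm.eval_congr (M := I.toFOStruc) t
        (fun x hx => H x (by simp [FOForm.fv, hx]))]
  | atom p ts =>
    intro h h' H
    simp only [FOForm.Sat]
    have : ∀ i, (ts i).eval I.toFOStruc h = (ts i).eval I.toFOStruc h' := by
      intro i
      exact FOTerm.eval_congr _ _ fun x hx => H x (by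
        simp only [FOForm.fv, Finset.mem_biUnion, Finset.mem_univ, true_and]
        exact ⟨i, hx⟩)
    rw [funext this]
  | not F ih =>
    intro h h' H
    simp only [FOForm.Sat]
    rw [ih H]
  | and F G ihF ihG =>
    intro h h' H
    simp only [FOForm.Sat]
    rw [ihF fun x hx => H x (by simp [FOForm.fv, hx]),
      ihG fun x hx => H x (by simp [FOForm.fv, hx])]
  | or F G ihF ihG =>
    intro h h' H
    simp only [FOForm.Sat]
    rw [ihF fun x hx => H x (by simp [FOForm.fv, hx]),
      ihG fun x hx => H x (by simp [FOForm.fv, hx])]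
  | imp F G ihF ihG =>
    intro h h' H
    simp only [FOForm.Sat]
    rw [ihF fun x hx => H x (by simp [FOForm.fv, hx]),
      ihG fun x hx => H x (by simp [FOForm.fv, hx])]
  | iff F G ihF ihG =>
    intro h h' H
    simp only [FOForm.Sat]
    rw [ihF fun x hx => H x (by simp [FOForm.fv, hx]),
      ihG fun x hx => H x (by simp [FOForm.fv, hx])]
  | ex x F ih =>
    intro h h' H
    simp only [FOForm.Sat]
    constructor
    · rintro ⟨d, hd⟩
      refine ⟨d, (ih ?_).mp hd⟩
      intro y hy
      rcases eq_or_ne y x with rfl | hyx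
      · simp [Function.update]
      · simp only [Function.update_of_ne hyx]
        exact H y (Finset.mem_erase.2 ⟨hyx, hy⟩)
    · rintro ⟨d, hd⟩
      refine ⟨d, (ih ?_).mpr hd⟩
      intro y hy
      rcases eq_or_ne y x with rfl | hyx
      · simp [Function.update]
      · simp only [Function.update_of_ne hyx]
        exact H y (Finset.mem_erase.2 ⟨hyx, hy⟩)
  | all x F ih =>
    intro h h' H
    simp only [FOForm.Sat]
    constructor
    · intro hd d
      refine (ih ?_).mp (hd d)
      intro y hy
      rcases eq_or_ne y x with rfl | hyx
      · simp [Function.update]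
      · simp only [Function.update_of_ne hyx]
        exact H y (Finset.mem_erase.2 ⟨hyx, hy⟩)
    · intro hd d
      refine (ih ?_).mpr (hd d)
      intro y hy
      rcases eq_or_ne y x with rfl | hyx
      · simp [Function.update]
      · simp only [Function.update_of_ne hyx]
        exact H y (Finset.mem_erase.2 ⟨hyx, hy⟩)

theorem esat_congr {F : FOForm L} {M : FOStruc L} {h h' : ℕ → M.carrier}
    (H : ∀ x ∈ F.fv, h x = h' x) : ESat M h F ↔ ESat M h' F :=
  sat_congr F M.toInterp H

/-- Pushing a term-model solution of an EQ-formula into an arbitrary model. -/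
theorem esat_push {E : FOForm L} (hE : IsEQ E) :
    ∀ {σ : ℕ → FOTerm L}, ESat (TermModel L) σ E →
    ∀ (M : FOStruc L) (g : ℕ → M.carrier), ESat M (fun x => (σ x).eval M g) E := by
  induction hE with
  | tru => intro σ _ M g; trivial
  | fal => intro σ h M g; exact h.elim
  | eq s t =>
    intro σ hσ M g
    have hst : s.applyT σ = t.applyT σ := by
      have h2 : s.eval (TermModel L) σ = t.eval (TermModel L) σ := hσ
      rwa [eval_termModel, eval_termModel] at h2
    show s.eval M _ = t.eval M _
    rw [← FOTerm.eval_applyT, ← FOTerm.eval_applyT, hst]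
  | and hF hG ihF ihG =>
    intro σ hσ M g
    exact ⟨ihF hσ.1 M g, ihG hσ.2 M g⟩
  | ex x hF ih =>
    intro σ hσ M g
    obtain ⟨d, hd⟩ := hσ
    refine ⟨d.eval M g, ?_⟩
    have := ih hd M g
    have heq : (fun y => ((Function.update σ x d) y).eval M g) =
        Function.update (fun y => (σ y).eval M g) x (d.eval M g) := by
      funext y
      rcases eq_or_ne y x with rfl | hyx
      · simp [Function.update]
      · simp [Function.update, hyx]
    show ESat M _ _
    exact cast (congrArg (fun k => ESat M k _) heq) this

/-! ### Systems of equations and unification -/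

/-- Variables of a system of equations. -/
def varsL : List (FOTerm L × FOTerm L) → Finset ℕ
  | [] => ∅
  | p :: l => p.1.vars ∪ p.2.vars ∪ varsL l

theorem mem_varsL {x : ℕ} : ∀ {l : List (FOTerm L × FOTerm L)},
    x ∈ varsL l ↔ ∃ p ∈ l, x ∈ p.1.vars ∨ x ∈ p.2.vars := by
  intro l
  induction l with
  | nil => simp [varsL]
  | cons p l ih => simp [varsL, ih, Finset.mem_union, or_assoc]

/-- Size of a system. -/
def sizeL : List (FOTerm L × FOTerm L) → ℕ
  | [] => 0
  | p :: l => p.1.size + p.2.size + sizeL l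

/-- `h` is a solution of the system `l` in `M`. -/
def MSol (M : FOStruc L) (h : ℕ → M.carrier) (l : List (FOTerm L × FOTerm L)) : Prop :=
  ∀ p ∈ l, p.1.eval M h = p.2.eval M h

theorem sizeL_append (a b : List (FOTerm L × FOTerm L)) :
    sizeL (a ++ b) = sizeL a + sizeL b := by
  induction a with
  | nil => simp [sizeL]
  | cons p a ih => simp [sizeL, ih]; omega

theorem sizeL_eq_sum (l : List (FOTerm L × FOTerm L)) :
    sizeL l = (l.map fun p => p.1.size + p.2.size).sum := by
  induction l with
  | nil => rfl
  | cons p l ih => simp [sizeL, ih]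

/-- The unification theorem: a system solvable in some model of FEA has a most
general unifier through which every solution in every FEA model factors. -/
theorem unif_aux : ∀ (n m : ℕ) (l : List (FOTerm L × FOTerm L)),
    (varsL l).card ≤ n → sizeL l ≤ m →
    (∃ M : FOStruc L, IsFEA M ∧ ∃ h, MSol M h l) →
    ∃ θ : ℕ → FOTerm L,
      (∀ x, x ∉ varsL l → θ x = .var x) ∧
      (∀ p ∈ l, p.1.applyT θ = p.2.applyT θ) ∧
      (∀ M : FOStruc L, IsFEA M → ∀ h, MSol M h l → ∃ g, ∀ x, h x = (θ x).eval M g) := by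
  intro n
  induction n using Nat.strong_induction_on with
  | _ n ihn =>
  intro m
  induction m using Nat.strong_induction_on with
  | _ m ihm =>
  intro l hn hm hex
  match l with
  | [] =>
    refine ⟨.var, fun x _ => rfl, fun p hp => absurd hp List.not_mem_nil, ?_⟩
    intro M _ h _
    exact ⟨h, fun x => rfl⟩
  | (s, t) :: l' =>
    obtain ⟨M0, hM0, h0, hsol0⟩ := hex
    have hhead0 : s.eval M0 h0 = t.eval M0 h0 := hsol0 (s, t) (List.mem_cons_self)
    have hsub' : varsL l' ⊆ varsL ((s, t) :: l') := by
      intro z hz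
      rw [mem_varsL] at hz ⊢
      obtain ⟨p, hp, h2⟩ := hz
      exact ⟨p, List.mem_cons_of_mem _ hp, h2⟩
    have hsvars : s.vars ⊆ varsL ((s, t) :: l') := by
      intro z hz
      rw [mem_varsL]
      exact ⟨(s, t), List.mem_cons_self, Or.inl hz⟩
    have htvars : t.vars ⊆ varsL ((s, t) :: l') := by
      intro z hz
      rw [mem_varsL]
      exact ⟨(s, t), List.mem_cons_self, Or.inr hz⟩
    have hsizec : sizeL ((s, t) :: l') = s.size + t.size + sizeL l' := rfl
    have hs1 := s.one_le_size
    have ht1 := t.one_le_size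
    -- Variable elimination step, handling both orientations of the head equation.
    have helim : ∀ (x : ℕ) (u : FOTerm L),
        ((s = .var x ∧ t = u) ∨ (t = .var x ∧ s = u)) → x ∉ u.vars →
        ∃ θ : ℕ → FOTerm L,
          (∀ z, z ∉ varsL ((s, t) :: l') → θ z = .var z) ∧
          (∀ p ∈ (s, t) :: l', p.1.applyT θ = p.2.applyT θ) ∧
          (∀ M : FOStruc L, IsFEA M → ∀ h, MSol M h ((s, t) :: l') →
            ∃ g, ∀ z, h z = (θ z).eval M g) := by
      intro x u hor hxu
      have hxl : x ∈ varsL ((s, t) :: l') := by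
        rw [mem_varsL]
        rcases hor with ⟨hs, _⟩ | ⟨ht, _⟩
        · exact ⟨(s, t), List.mem_cons_self, Or.inl (by rw [hs]; simp [FOTerm.vars])⟩
        · exact ⟨(s, t), List.mem_cons_self, Or.inr (by rw [ht]; simp [FOTerm.vars])⟩
      have hu : u.vars ⊆ varsL ((s, t) :: l') := by
        rcases hor with ⟨_, ht⟩ | ⟨_, hs⟩
        · exact ht ▸ htvars
        · exact hs ▸ hsvars
      have hsolu : ∀ (M : FOStruc L) (h : ℕ → M.carrier), MSol M h ((s, t) :: l') →
          h x = u.eval M h := by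
        intro M h hsol
        have := hsol (s, t) (List.mem_cons_self)
        rcases hor with ⟨hs, ht⟩ | ⟨ht, hs⟩
        · rw [hs, ht] at this; exact this
        · rw [hs, ht] at this; exact this.symm
      set δ : ℕ → FOTerm L := fun z => if z = x then u else .var z with hδ
      have hδx : δ x = u := if_pos rfl
      have hδz : ∀ z, z ≠ x → δ z = .var z := fun z hz => if_neg hz
      have hδeval : ∀ (M : FOStruc L) (h : ℕ → M.carrier), h x = u.eval M h →
          ∀ z, (δ z).eval M h = h z := by
        intro M h hx z
        rcases eq_or_ne z x with rfl | hzx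
        · rw [hδx, ← hx]
        · rw [hδz z hzx]; rfl
      set l'' := l'.map (fun p => (p.1.applyT δ, p.2.applyT δ)) with hl''
      have hvars'' : varsL l'' ⊆ (varsL ((s, t) :: l')).erase x := by
        intro z hz
        rw [mem_varsL] at hz
        obtain ⟨p, hp, hzp⟩ := hz
        rw [List.mem_map] at hp
        obtain ⟨q, hq, rfl⟩ := hp
        have hqv : q.1.vars ∪ q.2.vars ⊆ varsL ((s, t) :: l') := by
          intro w hw
          rw [mem_varsL]
          exact ⟨q, List.mem_cons_of_mem _ hq, by simpa [Finset.mem_union] using hw⟩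
        have key : ∀ (w : FOTerm L), z ∈ (w.applyT δ).vars →
            w.vars ⊆ varsL ((s, t) :: l') → z ∈ (varsL ((s, t) :: l')).erase x := by
          intro w hzw hw
          rw [FOTerm.vars_applyT, Finset.mem_biUnion] at hzw
          obtain ⟨y, hy, hzy⟩ := hzw
          rcases eq_or_ne y x with rfl | hyx
          · rw [hδx] at hzy
            exact Finset.mem_erase.2 ⟨fun h => hxu (h ▸ hzy), hu hzy⟩
          · rw [hδz y hyx, FOTerm.vars, Finset.mem_singleton] at hzy
            subst hzy
            exact Finset.mem_erase.2 ⟨hyx, hw hy⟩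
        rcases hzp with h1 | h2
        · exact key q.1 h1 (fun w hw => hqv (Finset.mem_union_left _ hw))
        · exact key q.2 h2 (fun w hw => hqv (Finset.mem_union_right _ hw))
      have hcomp : ∀ (M : FOStruc L) (h : ℕ → M.carrier), MSol M h ((s, t) :: l') →
          MSol M h l'' := by
        intro M h hsol p hp
        rw [List.mem_map] at hp
        obtain ⟨q, hq, rfl⟩ := hp
        have hq' := hsol q (List.mem_cons_of_mem _ hq)
        have hδh := hδeval M h (hsolu M h hsol)
        simp only [FOTerm.eval_applyT]
        rw [FOTerm.eval_congr q.1 M (fun y _ => hδh y),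
          FOTerm.eval_congr q.2 M (fun y _ => hδh y)]
        exact hq'
      -- the measure decreases: one fewer variable
      have hxcard : 1 ≤ (varsL ((s, t) :: l')).card := Finset.card_pos.2 ⟨x, hxl⟩
      have hcard'' : (varsL l'').card ≤ (varsL ((s, t) :: l')).card - 1 := by
        calc (varsL l'').card ≤ ((varsL ((s, t) :: l')).erase x).card :=
              Finset.card_le_card hvars''
        _ = (varsL ((s, t) :: l')).card - 1 := Finset.card_erase_of_mem hxl
      obtain ⟨θ'', c1, c2, c3⟩ := ihn ((varsL ((s, t) :: l')).card - 1)
        (by omega) (sizeL l'') l'' hcard'' le_rfl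
        ⟨M0, hM0, h0, hcomp M0 h0 hsol0⟩
      refine ⟨fun z => (δ z).applyT θ'', ?_, ?_, ?_⟩
      · intro z hz
        have hzx : z ≠ x := fun h => hz (h ▸ hxl)
        show (δ z).applyT θ'' = .var z
        rw [hδz z hzx]
        show θ'' z = .var z
        exact c1 z fun hmem => hz (Finset.mem_of_mem_erase (hvars'' hmem))
      · intro p hp
        rcases List.mem_cons.1 hp with rfl | hp'
        · -- head equation
          have huθ : u.applyT (fun z => (δ z).applyT θ'') = u.applyT θ'' := by
            apply FOTerm.applyT_congr
            intro z hz
            have hzx : z ≠ x := fun h => hxu (h ▸ hz)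
            rw [hδz z hzx]
            rfl
          have hxθ : (FOTerm.var x).applyT (fun z => (δ z).applyT θ'') =
              u.applyT θ'' := by
            show (δ x).applyT θ'' = _
            rw [hδx]
          rcases hor with ⟨hs, ht⟩ | ⟨ht, hs⟩
          · show s.applyT _ = t.applyT _
            rw [hs, ht, hxθ, huθ]
          · show s.applyT _ = t.applyT _
            rw [hs, ht, hxθ, huθ]
        · -- tail equations
          have e1 : p.1.applyT (fun z => (δ z).applyT θ'') = (p.1.applyT δ).applyT θ'' :=
            (FOTerm.applyT_applyT p.1 δ θ'').symm
          have e2 : p.2.applyT (fun z => (δ z).applyT θ'') = (p.2.applyT δ).applyT θ'' :=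
            (FOTerm.applyT_applyT p.2 δ θ'').symm
          rw [e1, e2]
          exact c2 (p.1.applyT δ, p.2.applyT δ) (List.mem_map.2 ⟨p, hp', rfl⟩)
      · intro M hM h hsol
        obtain ⟨g, hg⟩ := c3 M hM h (hcomp M h hsol)
        refine ⟨g, fun z => ?_⟩
        have : ((δ z).applyT θ'').eval M g = (δ z).eval M (fun y => (θ'' y).eval M g) :=
          FOTerm.eval_applyT (δ z) θ'' M g
        show h z = ((δ z).applyT θ'').eval M g
        rw [this]
        have hfun : (fun y => (θ'' y).eval M g) = h := funext fun y => (hg y).symm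
        rw [hfun]
        exact (hδeval M h (hsolu M h hsol) z).symm
    -- main case analysis on the head equation
    cases s with
    | var x =>
      by_cases htx : t = .var x
      · -- trivial equation, drop it
        subst htx
        have hm' : sizeL l' + 2 ≤ m := by
          rw [hsizec] at hm
          simp only [FOTerm.size] at hm
          omega
        obtain ⟨θ', c1, c2, c3⟩ := ihm (m - 1) (by omega) l'
          (le_trans (Finset.card_le_card hsub') hn) (by omega)
          ⟨M0, hM0, h0, fun p hp => hsol0 p (List.mem_cons_of_mem _ hp)⟩
        refine ⟨θ', ?_, ?_, ?_⟩
        · intro z hz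
          exact c1 z fun hmem => hz (hsub' hmem)
        · intro p hp
          rcases List.mem_cons.1 hp with rfl | hp'
          · rfl
          · exact c2 p hp'
        · intro M hM h hsol
          exact c3 M hM h fun p hp => hsol p (List.mem_cons_of_mem _ hp)
      · by_cases hxt : x ∈ t.vars
        · -- occurs check failure: contradiction with FEA
          exact absurd hhead0 (hM0.occ x t htx hxt h0)
        · exact helim x t (Or.inl ⟨rfl, rfl⟩) hxt
    | func f ss =>
      cases t with
      | var y =>
        by_cases hys : y ∈ (FOTerm.func f ss).vars
        · exact absurd hhead0.symm
            (hM0.occ y (FOTerm.func f ss) (fun h => by cases h) hys h0)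
        · exact helim y (FOTerm.func f ss) (Or.inr ⟨rfl, rfl⟩) hys
      | func g ts =>
        by_cases hfg : f = g
        · subst hfg
          -- decompose
          set lc := (List.ofFn fun i => (ss i, ts i)) ++ l' with hlc
          have hvarslc : varsL lc ⊆ varsL ((FOTerm.func f ss, FOTerm.func f ts) :: l') := by
            intro z hz
            rw [mem_varsL] at hz
            obtain ⟨p, hp, hzp⟩ := hz
            rw [List.mem_append] at hp
            rcases hp with hp | hp
            · rw [List.mem_ofFn] at hp
              obtain ⟨i, rfl⟩ := hp
              rw [mem_varsL]
              refine ⟨(FOTerm.func f ss, FOTerm.func f ts), List.mem_cons_self, ?_⟩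
              rcases hzp with h1 | h2
              · exact Or.inl (by
                  simp only [FOTerm.vars, Finset.mem_biUnion, Finset.mem_univ, true_and]
                  exact ⟨i, h1⟩)
              · exact Or.inr (by
                  simp only [FOTerm.vars, Finset.mem_biUnion, Finset.mem_univ, true_and]
                  exact ⟨i, h2⟩)
            · rw [mem_varsL]
              exact ⟨p, List.mem_cons_of_mem _ hp, hzp⟩
          have hsizelc : sizeL lc + 2 = sizeL ((FOTerm.func f ss, FOTerm.func f ts) :: l') := by
            rw [hsizec]
            rw [hlc, sizeL_append]
            have : sizeL (List.ofFn fun i => (ss i, ts i)) =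
                (∑ i, (ss i).size) + ∑ i, (ts i).size := by
              rw [sizeL_eq_sum, List.map_ofFn, List.sum_ofFn]
              simp only [Function.comp]
              rw [Finset.sum_add_distrib]
            rw [this]
            simp only [FOTerm.size]
            omega
          have hcomp : ∀ (M : FOStruc L), IsFEA M → ∀ (h : ℕ → M.carrier),
              MSol M h ((FOTerm.func f ss, FOTerm.func f ts) :: l') → MSol M h lc := by
            intro M hM h hsol p hp
            rw [List.mem_append] at hp
            rcases hp with hp | hp
            · rw [List.mem_ofFn] at hp
              obtain ⟨i, rfl⟩ := hp
              have := hsol _ (List.mem_cons_self)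
              simp only [FOTerm.eval] at this
              have := hM.inj f this
              exact congrFun this i
            · exact hsol p (List.mem_cons_of_mem _ hp)
          have hm' : sizeL lc < m := by omega
          obtain ⟨θ', c1, c2, c3⟩ := ihm (sizeL lc) hm' lc
            (le_trans (Finset.card_le_card hvarslc) hn) le_rfl
            ⟨M0, hM0, h0, hcomp M0 hM0 h0 hsol0⟩
          refine ⟨θ', ?_, ?_, ?_⟩
          · intro z hz
            exact c1 z fun hmem => hz (hvarslc hmem)
          · intro p hp
            rcases List.mem_cons.1 hp with rfl | hp'
            · show FOTerm.applyT θ' _ = FOTerm.applyT θ' _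
              simp only [FOTerm.applyT]
              congr 1
              funext i
              exact c2 (ss i, ts i) (List.mem_append_left _ (List.mem_ofFn.2 ⟨i, rfl⟩))
            · exact c2 p (List.mem_append_right _ hp')
          · intro M hM h hsol
            exact c3 M hM h (hcomp M hM h hsol)
        · -- clash: contradiction with FEA
          simp only [FOTerm.eval] at hhead0
          exact absurd hhead0 (hM0.disj f g hfg _ _)

theorem unif (l : List (FOTerm L × FOTerm L))
    (hex : ∃ M : FOStruc L, IsFEA M ∧ ∃ h, MSol M h l) :
    ∃ θ : ℕ → FOTerm L,
      (∀ x, x ∉ varsL l → θ x = .var x) ∧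
      (∀ p ∈ l, p.1.applyT θ = p.2.applyT θ) ∧
      (∀ M : FOStruc L, IsFEA M → ∀ h, MSol M h l → ∃ g, ∀ x, h x = (θ x).eval M g) :=
  unif_aux (varsL l).card (sizeL l) l le_rfl le_rfl hex

theorem freshVar_spec (s : Finset ℕ) : freshVar s ∉ s :=
  Nat.find_spec (exists_notin_finset s)

theorem varsL_append (a b : List (FOTerm L × FOTerm L)) :
    varsL (a ++ b) = varsL a ∪ varsL b := by
  ext z
  simp only [mem_varsL, List.mem_append, Finset.mem_union, mem_varsL]
  constructor
  · rintro ⟨p, hp | hp, h2⟩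
    · exact Or.inl ⟨p, hp, h2⟩
    · exact Or.inr ⟨p, hp, h2⟩
  · rintro (⟨p, hp, h2⟩ | ⟨p, hp, h2⟩)
    · exact ⟨p, Or.inl hp, h2⟩
    · exact ⟨p, Or.inr hp, h2⟩

/-- Prenex reduction: an EQ-formula is either unsatisfiable, or its solution
sets (in every pre-interpretation) are projections of the solution sets of a
finite system of equations. -/
theorem prenex {E : FOForm L} (hE : IsEQ E) : ∀ A : Finset ℕ,
    (∀ (M : FOStruc L) (h : ℕ → M.carrier), ¬ ESat M h E) ∨
    ∃ (zs : Finset ℕ) (l : List (FOTerm L × FOTerm L)),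
      Disjoint zs (A ∪ E.fv) ∧ varsL l ⊆ E.fv ∪ zs ∧
      ∀ (M : FOStruc L) (h : ℕ → M.carrier),
        ESat M h E ↔ ∃ g, (∀ x ∉ zs, g x = h x) ∧ MSol M g l := by
  induction hE with
  | tru =>
    intro A
    refine Or.inr ⟨∅, [], by simp, by simp [varsL], fun M h => ?_⟩
    constructor
    · intro _
      exact ⟨h, fun x _ => rfl, fun p hp => absurd hp List.not_mem_nil⟩
    · intro _
      trivial
  | fal =>
    intro A
    exact Or.inl fun M h hc => hc
  | eq s t =>
    intro A
    refine Or.inr ⟨∅, [(s, t)], by simp, ?_, fun M h => ?_⟩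
    · intro z hz
      rw [mem_varsL] at hz
      obtain ⟨p, hp, h2⟩ := hz
      rw [List.mem_singleton] at hp
      subst hp
      simp only [FOForm.fv, Finset.union_empty, Finset.mem_union]
      exact h2
    · constructor
      · intro hsat
        refine ⟨h, fun x _ => rfl, fun p hp => ?_⟩
        rw [List.mem_singleton] at hp
        subst hp
        exact hsat
      · rintro ⟨g, hg, hsol⟩
        have : g = h := funext fun x => hg x (Finset.notMem_empty x)
        have h2 := hsol (s, t) (List.mem_singleton_self _)
        rw [this] at h2
        exact h2
  | @and F G hF hG ihF ihG =>
    intro A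
    rcases ihF (A ∪ G.fv) with hbad | ⟨zs₁, l₁, hd₁, hv₁, hiff₁⟩
    · exact Or.inl fun M h hc => hbad M h hc.1
    rcases ihG (A ∪ F.fv ∪ zs₁) with hbad | ⟨zs₂, l₂, hd₂, hv₂, hiff₂⟩
    · exact Or.inl fun M h hc => hbad M h hc.2
    have hzs₁A : Disjoint zs₁ A := hd₁.mono_right (by intro x hx; simp [hx])
    have hzs₁F : Disjoint zs₁ F.fv := hd₁.mono_right (by intro x hx; simp [hx])
    have hzs₁G : Disjoint zs₁ G.fv := hd₁.mono_right (by intro x hx; simp [hx])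
    have hzs₂A : Disjoint zs₂ A := hd₂.mono_right (by intro x hx; simp [hx])
    have hzs₂F : Disjoint zs₂ F.fv := hd₂.mono_right (by intro x hx; simp [hx])
    have hzs₂G : Disjoint zs₂ G.fv := hd₂.mono_right (by intro x hx; simp [hx])
    have hzs₂₁ : Disjoint zs₂ zs₁ := hd₂.mono_right (by intro x hx; simp [hx])
    refine Or.inr ⟨zs₁ ∪ zs₂, l₁ ++ l₂, ?_, ?_, fun M h => ?_⟩
    · simp only [FOForm.fv]
      rw [Finset.disjoint_union_left]
      constructor
      · rw [Finset.disjoint_union_right, Finset.disjoint_union_right]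
        exact ⟨hzs₁A, hzs₁F, hzs₁G⟩
      · rw [Finset.disjoint_union_right, Finset.disjoint_union_right]
        exact ⟨hzs₂A, hzs₂F, hzs₂G⟩
    · rw [varsL_append]
      simp only [FOForm.fv]
      intro z hz
      rcases Finset.mem_union.1 hz with hz | hz
      · rcases Finset.mem_union.1 (hv₁ hz) with hz | hz
        · exact Finset.mem_union.2 (Or.inl (Finset.mem_union_left _ hz))
        · exact Finset.mem_union.2 (Or.inr (Finset.mem_union_left _ hz))
      · rcases Finset.mem_union.1 (hv₂ hz) with hz | hz
        · exact Finset.mem_union.2 (Or.inl (Finset.mem_union_right _ hz))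
        · exact Finset.mem_union.2 (Or.inr (Finset.mem_union_right _ hz))
    · constructor
      · rintro ⟨hsF, hsG⟩
        obtain ⟨g₁, hg₁, hsol₁⟩ := (hiff₁ M h).mp hsF
        obtain ⟨g₂, hg₂, hsol₂⟩ := (hiff₂ M h).mp hsG
        set g : ℕ → M.carrier :=
          fun x => if x ∈ zs₁ then g₁ x else if x ∈ zs₂ then g₂ x else h x with hgdef
        have hkey₁ : ∀ x ∈ F.fv ∪ zs₁, g x = g₁ x := by
          intro x hx
          rcases Finset.mem_union.1 hx with hx | hx
          · have hx₁ : x ∉ zs₁ := fun hc => Finset.disjoint_left.1 hzs₁F hc hx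
            have hx₂ : x ∉ zs₂ := fun hc => Finset.disjoint_left.1 hzs₂F hc hx
            simp only [hgdef, if_neg hx₁, if_neg hx₂]
            exact (hg₁ x hx₁).symm
          · simp [hgdef, if_pos hx]
        have hkey₂ : ∀ x ∈ G.fv ∪ zs₂, g x = g₂ x := by
          intro x hx
          rcases Finset.mem_union.1 hx with hx | hx
          · have hx₁ : x ∉ zs₁ := fun hc => Finset.disjoint_left.1 hzs₁G hc hx
            have hx₂ : x ∉ zs₂ := fun hc => Finset.disjoint_left.1 hzs₂G hc hx
            simp only [hgdef, if_neg hx₁, if_neg hx₂]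
            exact (hg₂ x hx₂).symm
          · have hx₁ : x ∉ zs₁ := fun hc => Finset.disjoint_left.1 hzs₂₁ hx hc
            simp [hgdef, if_neg hx₁, if_pos hx]
        refine ⟨g, ?_, ?_⟩
        · intro x hx
          rw [Finset.mem_union] at hx
          push_neg at hx
          simp [hgdef, if_neg hx.1, if_neg hx.2]
        · intro p hp
          rcases List.mem_append.1 hp with hp | hp
          · have e1 : p.1.eval M g = p.1.eval M g₁ :=
              FOTerm.eval_congr _ _ fun x hx => hkey₁ x (hv₁ (by
                rw [mem_varsL]; exact ⟨p, hp, Or.inl hx⟩))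
            have e2 : p.2.eval M g = p.2.eval M g₁ :=
              FOTerm.eval_congr _ _ fun x hx => hkey₁ x (hv₁ (by
                rw [mem_varsL]; exact ⟨p, hp, Or.inr hx⟩))
            rw [e1, e2]
            exact hsol₁ p hp
          · have e1 : p.1.eval M g = p.1.eval M g₂ :=
              FOTerm.eval_congr _ _ fun x hx => hkey₂ x (hv₂ (by
                rw [mem_varsL]; exact ⟨p, hp, Or.inl hx⟩))
            have e2 : p.2.eval M g = p.2.eval M g₂ :=
              FOTerm.eval_congr _ _ fun x hx => hkey₂ x (hv₂ (by
                rw [mem_varsL]; exact ⟨p, hp, Or.inr hx⟩))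
            rw [e1, e2]
            exact hsol₂ p hp
      · rintro ⟨g, hg, hsol⟩
        constructor
        · refine (hiff₁ M h).mpr ⟨fun x => if x ∈ zs₁ then g x else h x, ?_, ?_⟩
          · intro x hx
            simp [if_neg hx]
          · intro p hp
            have hagree : ∀ x ∈ F.fv ∪ zs₁,
                (if x ∈ zs₁ then g x else h x) = g x := by
              intro x hx
              rcases Finset.mem_union.1 hx with hx | hx
              · have hx₁ : x ∉ zs₁ := fun hc => Finset.disjoint_left.1 hzs₁F hc hx
                have hx₂ : x ∉ zs₂ := fun hc => Finset.disjoint_left.1 hzs₂F hc hx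
                rw [if_neg hx₁]
                exact (hg x (by
                  rw [Finset.mem_union]; push_neg; exact ⟨hx₁, hx₂⟩)).symm
              · rw [if_pos hx]
            have e1 := FOTerm.eval_congr p.1 M (h := fun x => if x ∈ zs₁ then g x else h x)
              (h' := g) fun x hx => hagree x (hv₁ (by
                rw [mem_varsL]; exact ⟨p, hp, Or.inl hx⟩))
            have e2 := FOTerm.eval_congr p.2 M (h := fun x => if x ∈ zs₁ then g x else h x)
              (h' := g) fun x hx => hagree x (hv₁ (by
                rw [mem_varsL]; exact ⟨p, hp, Or.inr hx⟩))
            rw [e1, e2]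
            exact hsol p (List.mem_append_left _ hp)
        · refine (hiff₂ M h).mpr ⟨fun x => if x ∈ zs₂ then g x else h x, ?_, ?_⟩
          · intro x hx
            simp [if_neg hx]
          · intro p hp
            have hagree : ∀ x ∈ G.fv ∪ zs₂,
                (if x ∈ zs₂ then g x else h x) = g x := by
              intro x hx
              rcases Finset.mem_union.1 hx with hx | hx
              · have hx₁ : x ∉ zs₁ := fun hc => Finset.disjoint_left.1 hzs₁G hc hx
                have hx₂ : x ∉ zs₂ := fun hc => Finset.disjoint_left.1 hzs₂G hc hx
                rw [if_neg hx₂]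
                exact (hg x (by
                  rw [Finset.mem_union]; push_neg; exact ⟨hx₁, hx₂⟩)).symm
              · rw [if_pos hx]
            have e1 := FOTerm.eval_congr p.1 M (h := fun x => if x ∈ zs₂ then g x else h x)
              (h' := g) fun x hx => hagree x (hv₂ (by
                rw [mem_varsL]; exact ⟨p, hp, Or.inl hx⟩))
            have e2 := FOTerm.eval_congr p.2 M (h := fun x => if x ∈ zs₂ then g x else h x)
              (h' := g) fun x hx => hagree x (hv₂ (by
                rw [mem_varsL]; exact ⟨p, hp, Or.inr hx⟩))
            rw [e1, e2]
            exact hsol p (List.mem_append_right _ hp)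
  | @ex z F hF ih =>
    intro A
    rcases ih (insert z A) with hbad | ⟨zs₁, l₁, hd₁, hv₁, hiff₁⟩
    · refine Or.inl fun M h hc => ?_
      obtain ⟨d, hd⟩ := hc
      exact hbad M _ hd
    have hzs₁A : Disjoint zs₁ A := hd₁.mono_right (by
      intro x hx
      simp only [Finset.mem_union, Finset.mem_insert]
      exact Or.inl (Or.inr hx))
    have hz₁ : z ∉ zs₁ := fun hc =>
      Finset.disjoint_left.1 hd₁ hc (by simp)
    have hzs₁F : Disjoint zs₁ F.fv := hd₁.mono_right (by intro x hx; simp [hx])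
    set S := A ∪ F.fv ∪ zs₁ ∪ varsL l₁ ∪ {z} with hS
    set z' := freshVar S with hz'
    have hz'S : z' ∉ S := freshVar_spec S
    have hz'A : z' ∉ A := fun hc => hz'S (by simp [hS, hc])
    have hz'F : z' ∉ F.fv := fun hc => hz'S (by simp [hS, hc])
    have hz'zs : z' ∉ zs₁ := fun hc => hz'S (by simp [hS, hc])
    have hz'l : z' ∉ varsL l₁ := fun hc => hz'S (by simp [hS, hc])
    have hz'z : z' ≠ z := fun hc => hz'S (by simp [hS, hc])
    set ρ : ℕ → FOTerm L := fun y => if y = z then .var z' else .var y with hρ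
    set l := l₁.map (fun p => (p.1.applyT ρ, p.2.applyT ρ)) with hl
    refine Or.inr ⟨insert z' zs₁, l, ?_, ?_, fun M h => ?_⟩
    · rw [Finset.disjoint_insert_left]
      constructor
      · simp only [Finset.mem_union]
        push_neg
        refine ⟨hz'A, fun hc => ?_⟩
        simp only [FOForm.fv] at hc
        exact hz'F (Finset.mem_of_mem_erase hc)
      · refine Finset.disjoint_union_right.2 ⟨hzs₁A, ?_⟩
        simp only [FOForm.fv]
        exact hzs₁F.mono_right (Finset.erase_subset _ _)
    · intro w hw
      rw [mem_varsL] at hw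
      obtain ⟨p, hp, hwp⟩ := hw
      rw [List.mem_map] at hp
      obtain ⟨q, hq, rfl⟩ := hp
      have key : ∀ u : FOTerm L, w ∈ (u.applyT ρ).vars → u.vars ⊆ varsL l₁ →
          w ∈ (FOForm.ex z F).fv ∪ insert z' zs₁ := by
        intro u hwu hu
        rw [FOTerm.vars_applyT, Finset.mem_biUnion] at hwu
        obtain ⟨y, hy, hwy⟩ := hwu
        rcases eq_or_ne y z with rfl | hyz
        · simp only [hρ, if_pos rfl, FOTerm.vars, Finset.mem_singleton] at hwy
          subst hwy
          exact Finset.mem_union_right _ (Finset.mem_insert_self _ _)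
        · simp only [hρ, if_neg hyz, FOTerm.vars, Finset.mem_singleton] at hwy
          subst hwy
          rcases Finset.mem_union.1 (hv₁ (hu hy)) with hc | hc
          · exact Finset.mem_union_left _ (by
              simp only [FOForm.fv, Finset.mem_erase]
              exact ⟨hyz, hc⟩)
          · exact Finset.mem_union_right _ (Finset.mem_insert_of_mem hc)
      have hqv : q.1.vars ∪ q.2.vars ⊆ varsL l₁ := by
        intro y hy
        rw [mem_varsL]
        exact ⟨q, hq, by simpa [Finset.mem_union] using hy⟩
      rcases hwp with h1 | h1
      · exact key q.1 h1 fun y hy => hqv (Finset.mem_union_left _ hy)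
      · exact key q.2 h1 fun y hy => hqv (Finset.mem_union_right _ hy)
    · have hevalρ : ∀ (u : FOTerm L) (g : ℕ → M.carrier),
          (u.applyT ρ).eval M g = u.eval M (Function.update g z (g z')) := by
        intro u g
        rw [FOTerm.eval_applyT]
        apply FOTerm.eval_congr
        intro y _
        rcases eq_or_ne y z with rfl | hyz
        · simp [hρ, FOTerm.eval, Function.update]
        · simp [hρ, if_neg hyz, FOTerm.eval, Function.update_of_ne hyz]
      constructor
      · rintro ⟨d, hd⟩
        obtain ⟨g, hg, hsol⟩ := (hiff₁ M (Function.update h z d)).mp hd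
        set g' : ℕ → M.carrier :=
          fun x => if x ∈ zs₁ then g x else if x = z' then d else h x with hg'def
        refine ⟨g', ?_, ?_⟩
        · intro x hx
          rw [Finset.mem_insert] at hx
          push_neg at hx
          simp [hg'def, if_neg hx.2, hx.1]
        · intro p hp
          rw [List.mem_map] at hp
          obtain ⟨q, hq, rfl⟩ := hp
          have hagree : ∀ y ∈ varsL l₁, Function.update g' z (g' z') y = g y := by
            intro y hyl
            by_cases hyz : y = z
            · rw [hyz, Function.update_self]
              have hgz' : g' z' = d := by
                simp [hg'def, if_neg hz'zs]
                rfl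
              rw [hgz']
              have h3 := hg z hz₁
              erw [Function.update_self] at h3
              exact h3.symm
            · rw [Function.update_of_ne hyz]
              by_cases hyzs : y ∈ zs₁
              · simp [hg'def, if_pos hyzs]
              · have hyz' : y ≠ z' := fun hc => hz'l (hc ▸ hyl)
                simp only [hg'def, if_neg hyzs, if_neg hyz']
                have := hg y hyzs
                erw [Function.update_of_ne hyz] at this
                exact (if_neg hyz').trans this.symm
          have hq' := hsol q hq
          have e1 : (q.1.applyT ρ).eval M g' = q.1.eval M g := by
            rw [hevalρ]
            exact FOTerm.eval_congr _ _ fun y hy => hagree y (by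
              rw [mem_varsL]; exact ⟨q, hq, Or.inl hy⟩)
          have e2 : (q.2.applyT ρ).eval M g' = q.2.eval M g := by
            rw [hevalρ]
            exact FOTerm.eval_congr _ _ fun y hy => hagree y (by
              rw [mem_varsL]; exact ⟨q, hq, Or.inr hy⟩)
          show (q.1.applyT ρ).eval M g' = (q.2.applyT ρ).eval M g'
          rw [e1, e2]
          exact hq'
      · rintro ⟨g', hg', hsol⟩
        set d := g' z' with hd
        refine ⟨d, (hiff₁ M (Function.update h z d)).mpr
          ⟨fun x => if x ∈ zs₁ then g' x else Function.update h z d x, ?_, ?_⟩⟩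
        · intro x hx
          simp [if_neg hx]
        · intro q hq
          have hagree : ∀ y ∈ varsL l₁,
              (if y ∈ zs₁ then g' y else Function.update h z d y) =
              Function.update g' z (g' z') y := by
            intro y hyl
            by_cases hyz : y = z
            · rw [hyz, if_neg hz₁, Function.update_self, Function.update_self]
            · rw [Function.update_of_ne hyz, Function.update_of_ne hyz]
              by_cases hyzs : y ∈ zs₁
              · rw [if_pos hyzs]
              · rw [if_neg hyzs]
                have hyz' : y ≠ z' := fun hc => hz'l (hc ▸ hyl)
                exact (hg' y (by
                  rw [Finset.mem_insert]; push_neg; exact ⟨hyz', hyzs⟩)).symm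
          have hq' := hsol (q.1.applyT ρ, q.2.applyT ρ) (List.mem_map.2 ⟨q, hq, rfl⟩)
          have e1 : (q.1.applyT ρ).eval M g' =
              q.1.eval M (fun y => if y ∈ zs₁ then g' y else Function.update h z d y) := by
            rw [hevalρ]
            exact (FOTerm.eval_congr _ _ fun y hy => (hagree y (by
              rw [mem_varsL]; exact ⟨q, hq, Or.inl hy⟩))).symm
          have e2 : (q.2.applyT ρ).eval M g' =
              q.2.eval M (fun y => if y ∈ zs₁ then g' y else Function.update h z d y) := by
            rw [hevalρ]
            exact (FOTerm.eval_congr _ _ fun y hy => (hagree y (by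
              rw [mem_varsL]; exact ⟨q, hq, Or.inr hy⟩))).symm
          rw [← e1, ← e2]
          exact hq'

/-- An EQ-formula is consistent over FEA. -/
def EQcons (E : FOForm L) : Prop := ∃ M : FOStruc L, IsFEA M ∧ ∃ h, ESat M h E

/-- Characterization theorem: a consistent EQ-formula is, over all models of
FEA, equivalent to a parametrized substitution pattern. -/
theorem char {E : FOForm L} (hE : IsEQ E) (hcons : EQcons E) (A : Finset ℕ) :
    ∃ (θ : ℕ → FOTerm L) (V D : Finset ℕ),
      Disjoint V A ∧ (∀ x ∉ D, θ x = .var x) ∧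
      ∀ M : FOStruc L, IsFEA M → ∀ h : ℕ → M.carrier,
        ESat M h E ↔ ∃ g, ∀ x ∉ V, h x = (θ x).eval M g := by
  obtain ⟨M₀, hM₀, h₀, hsat₀⟩ := hcons
  rcases prenex hE A with hbad | ⟨zs, l, hd, hv, hiff⟩
  · exact absurd hsat₀ (hbad M₀ h₀)
  obtain ⟨g₀, _, hsol₀⟩ := (hiff M₀ h₀).mp hsat₀
  obtain ⟨θ, c1, c2, c3⟩ := unif l ⟨M₀, hM₀, g₀, hsol₀⟩
  refine ⟨θ, zs, varsL l, hd.mono_right (Finset.subset_union_left), c1,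
    fun M hM h => ?_⟩
  constructor
  · intro hsat
    obtain ⟨g, hg, hsol⟩ := (hiff M h).mp hsat
    obtain ⟨k, hk⟩ := c3 M hM g hsol
    exact ⟨k, fun x hx => (hg x hx).symm.trans (hk x)⟩
  · rintro ⟨k, hk⟩
    set gh : ℕ → M.carrier := fun x => (θ x).eval M k with hgh
    have hsolgh : MSol M gh l := by
      intro p hp
      have := c2 p hp
      have e1 : (p.1.applyT θ).eval M k = p.1.eval M gh :=
        FOTerm.eval_applyT p.1 θ M k
      have e2 : (p.2.applyT θ).eval M k = p.2.eval M gh :=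
        FOTerm.eval_applyT p.2 θ M k
      rw [← e1, ← e2, this]
    refine (hiff M h).mpr ⟨fun x => if x ∈ zs then gh x else h x, ?_, ?_⟩
    · intro x hx
      simp [if_neg hx]
    · intro p hp
      have hagree : ∀ x, (if x ∈ zs then gh x else h x) = gh x := by
        intro x
        by_cases hx : x ∈ zs
        · rw [if_pos hx]
        · rw [if_neg hx]
          exact hk x hx
      have e1 := FOTerm.eval_congr p.1 M
        (h := fun x => if x ∈ zs then gh x else h x) (h' := gh) fun x _ => hagree x
      have e2 := FOTerm.eval_congr p.2 M
        (h := fun x => if x ∈ zs then gh x else h x) (h' := gh) fun x _ => hagree x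
      rw [e1, e2]
      exact hsolgh p hp

/-- Order reflection: inclusion of term-model solution sets implies
FEA-implication. -/
theorem ct {E E' : FOForm L} (hE : IsEQ E) (hE' : IsEQ E')
    (hsub : ∀ σ, ESat (TermModel L) σ E → ESat (TermModel L) σ E') :
    EQle E E' := by
  intro M hM h hsat
  have hcons : EQcons E := ⟨M, hM, h, hsat⟩
  obtain ⟨θ, V, D, _, hsupp, hiff⟩ := char hE hcons ∅
  obtain ⟨g, hg⟩ := (hiff M hM h).mp hsat
  set VL : Finset ℕ := D ∪ D.biUnion (fun x => (θ x).vars) ∪ V ∪ E'.fv with hVL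
  set N : ℕ := VL.sup id + 1 with hN
  have hVLlt : ∀ x ∈ VL, x < N := by
    intro x hx
    have := Finset.le_sup (f := id) hx
    simp only [id_eq] at this
    omega
  -- the generic solution of E with fresh variables for the bound part
  set σh : ℕ → FOTerm L := fun x => if x ∈ V then .var (N + x) else θ x with hσh
  have hσhE : ESat (TermModel L) σh E := by
    refine (hiff (TermModel L) termModel_isFEA σh).mpr ⟨.var, fun x hx => ?_⟩
    rw [eval_termModel, FOTerm.applyT_var]
    simp [hσh, if_neg hx]
    rfl
  have hσhE' : ESat (TermModel L) σh E' := hsub σh hσhE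
  set gs : ℕ → M.carrier := fun y => if N ≤ y ∧ (y - N) ∈ V then h (y - N) else g y
    with hgs
  have hpush := esat_push hE' hσhE' M gs
  refine (esat_congr ?_).mpr hpush
  intro x hx
  have hxVL : x ∈ VL := by
    simp only [hVL, Finset.mem_union]
    exact Or.inr hx
  by_cases hxV : x ∈ V
  · have : σh x = .var (N + x) := if_pos hxV
    rw [this]
    show h x = gs (N + x)
    have hcond : N ≤ N + x ∧ (N + x - N) ∈ V := ⟨Nat.le_add_right _ _, by simpa⟩
    rw [hgs]
    simp only [if_pos hcond]
    congr 1
    omega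
  · have hσx : σh x = θ x := if_neg hxV
    rw [hσx]
    have hgseq : (θ x).eval M gs = (θ x).eval M g := by
      apply FOTerm.eval_congr
      intro y hy
      have hyVL : y ∈ VL := by
        by_cases hxD : x ∈ D
        · simp only [hVL, Finset.mem_union]
          exact Or.inl (Or.inl (Or.inr (Finset.mem_biUnion.2 ⟨x, hxD, hy⟩)))
        · rw [hsupp x hxD] at hy
          simp only [FOTerm.vars, Finset.mem_singleton] at hy
          subst hy
          exact hxVL
      have hylt := hVLlt y hyVL
      rw [hgs]
      simp only
      rw [if_neg (by omega)]
    rw [hgseq]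
    exact hg x hxV

/-- Instance closure of term-model solution sets of EQ-formulas. -/
theorem solT_instance {E : FOForm L} (hE : IsEQ E) {σ : ℕ → FOTerm L}
    (hσ : ESat (TermModel L) σ E) (δ : ℕ → FOTerm L) :
    ESat (TermModel L) (fun x => (σ x).applyT δ) E := by
  have := esat_push hE hσ (TermModel L) δ
  have heq : (fun x => (σ x).eval (TermModel L) δ) = fun x => (σ x).applyT δ :=
    funext fun x => eval_termModel (σ x) δ
  rwa [heq] at this

section Window

variable (σ₀ : ℕ → FOTerm L) (W : Finset ℕ)

/-- Shape analysis: outside the window, a characterizing substitution for a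
formula implied by `E₀` is an injective renaming, uncoupled to the rest. -/
theorem shape_lemma (hw1 : ∀ x ∉ W, σ₀ x = .var x)
    (hw2 : ∀ x, (σ₀ x).vars ⊆ W ∪ {x})
    (θ : ℕ → FOTerm L) (V : Finset ℕ) (gs : ℕ → FOTerm L)
    (hgs : ∀ x ∉ V, σ₀ x = (θ x).applyT gs) :
    (∀ z, z ∉ W → z ∉ V → ∃ w, θ z = .var w ∧ gs w = .var z) ∧
    (∀ z w, z ∉ W → z ∉ V → θ z = .var w →
      ∀ u, u ∉ V → u ≠ z → w ∉ (θ u).vars) := by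
  constructor
  · intro z hzW hzV
    have h1 : (θ z).applyT gs = .var z := by rw [← hgs z hzV, hw1 z hzW]
    cases hθz : θ z with
    | var w =>
      refine ⟨w, rfl, ?_⟩
      rw [hθz] at h1
      exact h1
    | func f ts =>
      rw [hθz] at h1
      exact absurd h1 (by simp [FOTerm.applyT])
  · intro z w hzW hzV hθz u huV huz hwu
    have h1 : z ∈ ((θ u).applyT gs).vars := by
      rw [FOTerm.vars_applyT, Finset.mem_biUnion]
      refine ⟨w, hwu, ?_⟩
      have hgsw : gs w = .var z := by
        have h2 : (θ z).applyT gs = .var z := by rw [← hgs z hzV, hw1 z hzW]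
        rw [hθz] at h2
        exact h2
      rw [hgsw]
      simp [FOTerm.vars]
    rw [← hgs u huV] at h1
    rcases Finset.mem_union.1 (hw2 u h1) with h2 | h2
    · exact hzW h2
    · have h3 : z = u := by simpa using h2
      exact huz h3.symm

/-- Cylindricity: the solution set of a formula implied by `E₀` does not
constrain coordinates outside the window. -/
theorem cyl_lemma (hw1 : ∀ x ∉ W, σ₀ x = .var x)
    (hw2 : ∀ x, (σ₀ x).vars ⊆ W ∪ {x})
    (F : FOForm L) (θ : ℕ → FOTerm L) (V : Finset ℕ)
    (hiff : ∀ σ, ESat (TermModel L) σ F ↔ ∃ g, ∀ x ∉ V, σ x = (θ x).applyT g)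
    (hσ₀ : ESat (TermModel L) σ₀ F) :
    ∀ σ, ESat (TermModel L) σ F → ∀ x ∉ W, ∀ t,
      ESat (TermModel L) (Function.update σ x t) F := by
  obtain ⟨gs, hgs⟩ := (hiff σ₀).mp hσ₀
  intro σ hσ x hxW t
  obtain ⟨g, hg⟩ := (hiff σ).mp hσ
  by_cases hxV : x ∈ V
  · refine (hiff _).mpr ⟨g, fun z hz => ?_⟩
    have hzx : z ≠ x := fun hc => hz (hc ▸ hxV)
    rw [Function.update_of_ne hzx]
    exact hg z hz
  · obtain ⟨w, hθx, _⟩ := (shape_lemma σ₀ W hw1 hw2 θ V gs hgs).1 x hxW hxV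
    refine (hiff _).mpr ⟨Function.update g w t, fun z hz => ?_⟩
    rcases eq_or_ne z x with rfl | hzx
    · rw [Function.update_self, hθx]
      show t = Function.update g w t w
      erw [Function.update_self]
    · rw [Function.update_of_ne hzx]
      rw [hg z hz]
      apply FOTerm.applyT_congr
      intro y hy
      have hyw : y ≠ w := fun hc =>
        (shape_lemma σ₀ W hw1 hw2 θ V gs hgs).2 x w hxW hxV hθx z hz hzx
          (hc ▸ hy)
      erw [Function.update_of_ne hyw]

/-- Finite cylindrical modification. -/
theorem cylfin (F : FOForm L)
    (cyl : ∀ σ, ESat (TermModel L) σ F → ∀ x ∉ W, ∀ t,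
      ESat (TermModel L) (Function.update σ x t) F) :
    ∀ Q : Finset ℕ, (∀ z ∈ Q, z ∉ W) → ∀ σ', ESat (TermModel L) σ' F →
      ∀ σ : ℕ → FOTerm L, (∀ z, z ∉ Q → σ z = σ' z) → ESat (TermModel L) σ F := by
  intro Q
  induction Q using Finset.induction_on with
  | empty =>
    intro _ σ' hσ' σ hagree
    have : σ = σ' := funext fun z => hagree z (Finset.notMem_empty z)
    rwa [this]
  | @insert a Q haQ ih =>
    intro hQW σ' hσ' σ hagree
    have haW : a ∉ W := hQW a (Finset.mem_insert_self _ _)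
    have h1 : ESat (TermModel L) (Function.update σ' a (σ a)) F :=
      cyl σ' hσ' a haW (σ a)
    refine ih (fun z hz => hQW z (Finset.mem_insert_of_mem hz))
      (Function.update σ' a (σ a)) h1 σ fun z hz => ?_
    rcases eq_or_ne z a with rfl | hza
    · erw [Function.update_self]
    · erw [Function.update_of_ne hza]
      exact hagree z fun hc => by
        rcases Finset.mem_insert.1 hc with h | h
        · exact hza h
        · exact hz h

end Window

/-- Finiteness of bounded-size terms over finite vocabularies. -/
theorem bounded_terms_finite : ∀ (B : ℕ) (P : Finset ℕ) (Sig : Finset L.Func),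
    {t : FOTerm L | t.size ≤ B ∧ ↑t.vars ⊆ (↑P : Set ℕ) ∧
      ↑t.symbols ⊆ (↑Sig : Set L.Func)}.Finite := by
  intro B
  induction B with
  | zero =>
    intro P Sig
    convert Set.finite_empty
    ext t
    simp only [Set.mem_setOf_eq, Set.mem_empty_iff_false, iff_false, not_and]
    intro h
    have := t.one_le_size
    omega
  | succ B ih =>
    intro P Sig
    have hsub : {t : FOTerm L | t.size ≤ B + 1 ∧ ↑t.vars ⊆ (↑P : Set ℕ) ∧
        ↑t.symbols ⊆ (↑Sig : Set L.Func)} ⊆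
        ((fun x => (.var x : FOTerm L)) '' ↑P) ∪
        ⋃ f ∈ Sig, (fun ts => (.func f ts : FOTerm L)) ''
          {ts | ∀ i, ts i ∈ {t : FOTerm L | t.size ≤ B ∧ ↑t.vars ⊆ (↑P : Set ℕ) ∧
            ↑t.symbols ⊆ (↑Sig : Set L.Func)}} := by
      rintro t ⟨hsize, hvars, hsym⟩
      cases t with
      | var x =>
        left
        exact ⟨x, hvars (by simp [FOTerm.vars]), rfl⟩
      | func f ts =>
        right
        rw [Set.mem_iUnion]
        refine ⟨f, ?_⟩
        rw [Set.mem_iUnion]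
        refine ⟨hsym (by simp [FOTerm.symbols]), ⟨ts, fun i => ?_, rfl⟩⟩
        refine ⟨?_, ?_, ?_⟩
        · have h1 : (ts i).size ≤ ∑ j, (ts j).size :=
            Finset.single_le_sum (f := fun j => (ts j).size)
              (fun j _ => Nat.zero_le _) (Finset.mem_univ i)
          have h2 : (1 : ℕ) + ∑ j, (ts j).size ≤ B + 1 := hsize
          omega
        · intro y hy
          refine hvars ?_
          show y ∈ (FOTerm.func f ts).vars
          simp only [FOTerm.vars, Finset.mem_biUnion, Finset.mem_univ, true_and]
          exact ⟨i, hy⟩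
        · intro g hg
          refine hsym ?_
          show g ∈ (FOTerm.func f ts).symbols
          simp only [FOTerm.symbols, Finset.mem_insert, Finset.mem_biUnion,
            Finset.mem_univ, true_and]
          exact Or.inr ⟨i, hg⟩
    refine Set.Finite.subset ?_ hsub
    refine Set.Finite.union (Set.Finite.image _ P.finite_toSet) ?_
    refine Set.Finite.biUnion Sig.finite_toSet fun f _ => Set.Finite.image _ ?_
    have : {ts : Fin (L.farity f) → FOTerm L | ∀ i, ts i ∈
        {t : FOTerm L | t.size ≤ B ∧ ↑t.vars ⊆ (↑P : Set ℕ) ∧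
          ↑t.symbols ⊆ (↑Sig : Set L.Func)}} =
        Set.pi Set.univ fun _ => {t : FOTerm L | t.size ≤ B ∧
          ↑t.vars ⊆ (↑P : Set ℕ) ∧ ↑t.symbols ⊆ (↑Sig : Set L.Func)} := by
      ext ts
      simp [Set.mem_pi]
    rw [this]
    exact Set.Finite.pi fun _ => ih P Sig

/-- The finite set of candidate small witnesses. -/
theorem gset_finite (W P : Finset ℕ) (B : ℕ) (Sig : Finset L.Func) :
    {γ : ℕ → FOTerm L | (∀ z ∉ W, γ z = .var z) ∧ ∀ z ∈ W, (γ z).size ≤ B ∧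
      ↑(γ z).vars ⊆ (↑P : Set ℕ) ∧ ↑(γ z).symbols ⊆ (↑Sig : Set L.Func)}.Finite := by
  set T := {t : FOTerm L | t.size ≤ B ∧ ↑t.vars ⊆ (↑P : Set ℕ) ∧
    ↑t.symbols ⊆ (↑Sig : Set L.Func)} with hT
  have hTfin : T.Finite := bounded_terms_finite B P Sig
  haveI := hTfin.to_subtype
  set e : ((z : {x // x ∈ W}) → T) → (ℕ → FOTerm L) := fun f z =>
    if hz : z ∈ W then (f ⟨z, hz⟩ : FOTerm L) else .var z with he
  refine Set.Finite.subset (Set.finite_range e) ?_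
  rintro γ ⟨h1, h2⟩
  refine ⟨fun z => ⟨γ z, (h2 z z.2).1, (h2 z z.2).2.1, (h2 z z.2).2.2⟩, ?_⟩
  funext z
  by_cases hz : z ∈ W
  · simp [he, dif_pos hz]
  · simp [he, dif_neg hz, h1 z hz]

/-- Transfer the characterization to the term model. -/
theorem char_toT (F : FOForm L) (θ : ℕ → FOTerm L) (V : Finset ℕ)
    (hiff : ∀ M : FOStruc L, IsFEA M → ∀ h, ESat M h F ↔
      ∃ g, ∀ x ∉ V, h x = (θ x).eval M g) :
    ∀ σ, ESat (TermModel L) σ F ↔ ∃ g, ∀ x ∉ V, σ x = (θ x).applyT g := by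
  intro σ
  rw [hiff (TermModel L) termModel_isFEA σ]
  constructor
  · rintro ⟨g, hg⟩
    exact ⟨g, fun x hx => by erw [← eval_termModel]; exact hg x hx⟩
  · rintro ⟨g, hg⟩
    exact ⟨g, fun x hx => by rw [eval_termModel]; exact hg x hx⟩

/-- The key finiteness theorem: there is a fixed finite set `G` of
substitutions such that any strict implication between EQ-formulas lying
above a fixed consistent `E₀` is witnessed inside `G`. -/
theorem key_finiteness {E₀ : FOForm L} (hE₀ : IsEQ E₀) (hcons : EQcons E₀) :
    ∃ G : Set (ℕ → FOTerm L), G.Finite ∧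
      ∀ F F' : FOForm L, IsEQ F → IsEQ F' →
        (∀ σ, ESat (TermModel L) σ E₀ → ESat (TermModel L) σ F') →
        (∀ σ, ESat (TermModel L) σ F' → ESat (TermModel L) σ F) →
        ∃ γ ∈ G, ESat (TermModel L) γ F ∧
          (ESat (TermModel L) γ F' → ∀ σ, ESat (TermModel L) σ F →
            ESat (TermModel L) σ F') := by
  classical
  obtain ⟨θ₀, V₀, D₀, _, hsupp₀, hiff₀⟩ := char hE₀ hcons ∅
  set σ₀ : ℕ → FOTerm L := fun x => if x ∈ V₀ then .var x else θ₀ x with hσ₀def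
  set W : Finset ℕ := V₀ ∪ D₀ ∪ D₀.biUnion (fun x => (θ₀ x).vars) with hW
  have hw1 : ∀ x ∉ W, σ₀ x = .var x := by
    intro x hx
    have hxV : x ∉ V₀ := fun hc => hx (by simp [hW, hc])
    have hxD : x ∉ D₀ := fun hc => hx (by simp [hW, hc])
    simp only [hσ₀def, if_neg hxV]
    exact hsupp₀ x hxD
  have hw2 : ∀ x, (σ₀ x).vars ⊆ W ∪ {x} := by
    intro x y hy
    by_cases hxV : x ∈ V₀
    · simp only [hσ₀def, if_pos hxV, FOTerm.vars, Finset.mem_singleton] at hy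
      subst hy
      simp
    · simp only [hσ₀def, if_neg hxV] at hy
      by_cases hxD : x ∈ D₀
      · refine Finset.mem_union_left _ ?_
        simp only [hW, Finset.mem_union]
        exact Or.inr (Finset.mem_biUnion.2 ⟨x, hxD, hy⟩)
      · rw [hsupp₀ x hxD] at hy
        simp only [FOTerm.vars, Finset.mem_singleton] at hy
        subst hy
        simp
  have hiffT₀ := char_toT E₀ θ₀ V₀ hiff₀
  have hσ₀E₀ : ESat (TermModel L) σ₀ E₀ := by
    refine (hiffT₀ σ₀).mpr ⟨.var, fun x hx => ?_⟩
    rw [FOTerm.applyT_var]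
    simp [hσ₀def, if_neg hx]
    rfl
  -- fixed numerical data
  set B : ℕ := W.sup fun z => (σ₀ z).size with hB
  set Sg : Finset L.Func := W.biUnion fun z => (σ₀ z).symbols with hSg
  set Bsum : ℕ := ∑ z ∈ W, (σ₀ z).size with hBsum
  set N : ℕ := W.sup id + 1 with hN
  set P : Finset ℕ := (Finset.range (Bsum + 1)).image (fun i => N + i) with hP
  have hPW : ∀ p ∈ P, p ∉ W := by
    intro p hp hpW
    have h1 := Finset.le_sup (f := id) hpW
    simp only [id_eq] at h1
    simp only [hP, Finset.mem_image, Finset.mem_range] at hp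
    obtain ⟨i, _, rfl⟩ := hp
    omega
  have hPcard : P.card = Bsum + 1 := by
    rw [hP, Finset.card_image_of_injective _ (fun a b h => by omega),
      Finset.card_range]
  set G : Set (ℕ → FOTerm L) := {γ | (∀ z ∉ W, γ z = .var z) ∧ ∀ z ∈ W,
    (γ z).size ≤ B ∧ ↑(γ z).vars ⊆ (↑P : Set ℕ) ∧
    ↑(γ z).symbols ⊆ (↑Sg : Set L.Func)} with hG
  refine ⟨G, gset_finite W P B Sg, ?_⟩
  intro F F' hF hF' h₀F' hF'F
  have hσ₀F' : ESat (TermModel L) σ₀ F' := h₀F' σ₀ hσ₀E₀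
  have hσ₀F : ESat (TermModel L) σ₀ F := hF'F σ₀ hσ₀F'
  obtain ⟨θ, V, D, hdisj, hsuppF, hiffF⟩ :=
    char hF ⟨TermModel L, termModel_isFEA, σ₀, hσ₀F⟩ (W ∪ P)
  obtain ⟨θ', V', D', hdisj', hsuppF', hiffF'⟩ :=
    char hF' ⟨TermModel L, termModel_isFEA, σ₀, hσ₀F'⟩ (W ∪ P)
  have hiffFT := char_toT F θ V hiffF
  have hiffF'T := char_toT F' θ' V' hiffF'
  have hWnV : ∀ z ∈ W, z ∉ V := fun z hzW hzV =>
    Finset.disjoint_left.1 hdisj hzV (Finset.mem_union_left _ hzW)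
  have hPnV : ∀ z ∈ P, z ∉ V := fun z hzP hzV =>
    Finset.disjoint_left.1 hdisj hzV (Finset.mem_union_right _ hzP)
  obtain ⟨gs, hgs⟩ := (hiffFT σ₀).mp hσ₀F
  -- the window image of θ and its renaming into the pool P
  set R : Finset ℕ := W.biUnion fun z => (θ z).vars with hR
  have hθsize : ∀ z ∈ W, (θ z).size ≤ (σ₀ z).size := by
    intro z hzW
    rw [hgs z (hWnV z hzW)]
    exact FOTerm.size_le_size_applyT _ _
  have hRcard : R.card ≤ Bsum := by
    calc R.card ≤ ∑ z ∈ W, (θ z).vars.card := Finset.card_biUnion_le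
    _ ≤ ∑ z ∈ W, (σ₀ z).size := Finset.sum_le_sum fun z hz =>
        le_trans (FOTerm.card_vars_le_size _) (hθsize z hz)
  have hcardle : Fintype.card ↑R ≤ Fintype.card ↑P := by
    rw [Fintype.card_coe, Fintype.card_coe, hPcard]
    omega
  obtain ⟨e⟩ := Function.Embedding.nonempty_of_card_le hcardle
  set r : ℕ → ℕ := fun v => if hv : v ∈ R then (e ⟨v, hv⟩ : ℕ) else v with hr
  have hrP : ∀ v ∈ R, r v ∈ P := by
    intro v hv
    simp only [hr, dif_pos hv]
    exact (e ⟨v, hv⟩).2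
  have hrinj : ∀ v ∈ R, ∀ u ∈ R, r v = r u → v = u := by
    intro v hv u hu hru
    simp only [hr, dif_pos hv, dif_pos hu] at hru
    have := e.injective (Subtype.ext hru)
    exact Subtype.ext_iff.1 this
  set γ : ℕ → FOTerm L := fun z =>
    if z ∈ W then (θ z).applyT (fun y => .var (r y)) else .var z with hγ
  have hvarsR : ∀ z ∈ W, (θ z).vars ⊆ R := by
    intro z hz y hy
    exact Finset.mem_biUnion.2 ⟨z, hz, hy⟩
  -- γ lies in G
  have hγG : γ ∈ G := by
    refine ⟨fun z hz => by simp [hγ, if_neg hz], fun z hz => ?_⟩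
    have hzV := hWnV z hz
    simp only [hγ, if_pos hz]
    refine ⟨?_, ?_, ?_⟩
    · rw [FOTerm.size_applyT_vars _ _ (fun y _ => ⟨r y, rfl⟩)]
      calc (θ z).size ≤ (σ₀ z).size := hθsize z hz
      _ ≤ B := Finset.le_sup (f := fun z => (σ₀ z).size) hz
    · intro y hy
      rw [FOTerm.vars_applyT, Finset.coe_biUnion] at hy
      simp only [Set.mem_iUnion] at hy
      obtain ⟨w, hw, hyw⟩ := hy
      simp only [FOTerm.vars, Finset.coe_singleton, Set.mem_singleton_iff] at hyw
      subst hyw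
      exact hrP w (hvarsR z hz hw)
    · intro f hf
      rw [FOTerm.symbols_applyT_vars _ _ (fun y _ => ⟨r y, rfl⟩)] at hf
      have h1 : f ∈ ((θ z).applyT gs).symbols := FOTerm.symbols_applyT _ _ hf
      rw [← hgs z hzV] at h1
      show f ∈ (↑Sg : Set L.Func)
      rw [hSg, Finset.coe_biUnion]
      simp only [Set.mem_iUnion]
      exact ⟨z, Finset.mem_coe.2 hz, Finset.mem_coe.2 h1⟩
  -- γ satisfies F
  have hγF : ESat (TermModel L) γ F := by
    refine (hiffFT γ).mpr ⟨fun v => if v ∈ R then .var (r v) else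
      if hv : ∃ z, z ∉ W ∧ z ∉ V ∧ θ z = .var v then .var hv.choose else .var v,
      fun z hzV => ?_⟩
    by_cases hzW : z ∈ W
    · simp only [hγ, if_pos hzW]
      apply FOTerm.applyT_congr
      intro y hy
      rw [if_pos (hvarsR z hzW hy)]
    · obtain ⟨w, hθz, hgsw⟩ :=
        (shape_lemma σ₀ W hw1 hw2 θ V gs hgs).1 z hzW hzV
      have hwR : w ∉ R := by
        intro hwR
        rw [hR, Finset.mem_biUnion] at hwR
        obtain ⟨u, huW, hwu⟩ := hwR
        have huz : u ≠ z := fun hc => hzW (hc ▸ huW)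
        exact (shape_lemma σ₀ W hw1 hw2 θ V gs hgs).2 z w hzW hzV hθz u
          (hWnV u huW) huz hwu
      have hex : ∃ z', z' ∉ W ∧ z' ∉ V ∧ θ z' = .var w := ⟨z, hzW, hzV, hθz⟩
      simp only [hγ, if_neg hzW, hθz, FOTerm.applyT, if_neg hwR, dif_pos hex]
      obtain ⟨hcW, hcV, hcθ⟩ := hex.choose_spec
      have h1 : σ₀ hex.choose = FOTerm.var z := by
        rw [hgs hex.choose hcV, hcθ]
        show gs w = _
        exact hgsw
      rw [hw1 hex.choose hcW] at h1
      have h2 : hex.choose = z := by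
        have := h1
        injection this
      rw [h2]
  refine ⟨γ, hγG, hγF, ?_⟩
  -- strictness: if γ also satisfies F', then F implies F' over the term model
  intro hγF' σ hσF
  obtain ⟨gσ, hgσ⟩ := (hiffFT σ).mp hσF
  set δ : ℕ → FOTerm L := fun v =>
    if hv : ∃ u, u ∈ R ∧ r u = v then gσ hv.choose else σ v with hδ
  have hγδF' : ESat (TermModel L) (fun z => (γ z).applyT δ) F' :=
    solT_instance hF' hγF' δ
  have hagree : ∀ z, z ∉ P → σ z = (γ z).applyT δ := by
    intro z hzP
    by_cases hzW : z ∈ W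
    · simp only [hγ, if_pos hzW]
      rw [FOTerm.applyT_applyT]
      rw [hgσ z (hWnV z hzW)]
      apply FOTerm.applyT_congr
      intro y hy
      have hyR := hvarsR z hzW hy
      show gσ y = (FOTerm.var (r y)).applyT δ
      have hex : ∃ u, u ∈ R ∧ r u = r y := ⟨y, hyR, rfl⟩
      show gσ y = δ (r y)
      rw [hδ]
      refine Eq.trans ?_ (dif_pos hex).symm
      obtain ⟨hcR, hceq⟩ := hex.choose_spec
      rw [hrinj _ hcR _ hyR hceq]
    · simp only [hγ, if_neg hzW]
      show σ z = δ z
      rw [hδ]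
      have hnex : ¬ ∃ u, u ∈ R ∧ r u = z := by
        rintro ⟨u, huR, hru⟩
        exact hzP (hru ▸ hrP u huR)
      exact (dif_neg (e := fun _ => σ z) hnex).symm
  have cylF' := cyl_lemma σ₀ W hw1 hw2 F' θ' V' hiffF'T hσ₀F'
  exact cylfin W F' cylF' P hPW _ hγδF' σ fun z hz => hagree z hz

theorem eqle_refl (E : FOForm L) : EQle E E := fun _ _ _ hs => hs

theorem eqle_trans {E F G : FOForm L} (h1 : EQle E F) (h2 : EQle F G) :
    EQle E G := fun M hM h hs => h2 M hM h (h1 M hM h hs)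

theorem eqequiv_equivalence :
    Equivalence (fun a b : EQSub L => EQequiv a.1 b.1) :=
  ⟨fun a => ⟨eqle_refl a.1, eqle_refl a.1⟩,
    fun h => ⟨h.2, h.1⟩,
    fun h1 h2 => ⟨eqle_trans h1.1 h2.1, eqle_trans h2.2 h1.2⟩⟩

theorem eqquot_exact {a b : EQSub L}
    (h : (Quot.mk _ a : EQQuot L) = Quot.mk _ b) : EQequiv a.1 b.1 :=
  (eqequiv_equivalence.eqvGen_iff).mp (Quot.eqvGen_exact h)

noncomputable instance eqquotPartialOrder : PartialOrder (EQQuot L) where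
  le := EQQuotLe
  le_refl a := by
    obtain ⟨E, rfl⟩ := Quot.exists_rep a
    exact ⟨E, E, rfl, rfl, eqle_refl _⟩
  le_trans a b c hab hbc := by
    obtain ⟨E₁, E₂, ha, hb, h12⟩ := hab
    obtain ⟨E₃, E₄, hb', hc, h34⟩ := hbc
    have h23 : EQequiv E₂.1 E₃.1 := eqquot_exact (hb.trans hb'.symm)
    exact ⟨E₁, E₄, ha, hc, eqle_trans (eqle_trans h12 h23.1) h34⟩
  le_antisymm a b hab hba := by
    obtain ⟨E₁, E₂, ha, hb, h12⟩ := hab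
    obtain ⟨E₃, E₄, hb', ha', h34⟩ := hba
    have h23 : EQequiv E₂.1 E₃.1 := eqquot_exact (hb.trans hb'.symm)
    have h41 : EQequiv E₄.1 E₁.1 := eqquot_exact (ha'.trans ha.symm)
    have : EQequiv E₁.1 E₂.1 :=
      ⟨h12, eqle_trans (eqle_trans h23.1 h34) h41.1⟩
    rw [← ha, ← hb]
    exact Quot.sound this

theorem eqquot_le_iff {a b : EQQuot L} : a ≤ b ↔ EQQuotLe a b := Iff.rfl

/-- The canonical map into the quotient. -/
def mkE (E : EQSub L) : EQQuot L := Quot.mk _ E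

theorem exists_mkE_rep (a : EQQuot L) : ∃ E : EQSub L, mkE E = a :=
  Quot.exists_rep a

theorem mk_le_mk {E E' : EQSub L} : mkE E ≤ mkE E' ↔ EQle E.1 E'.1 := by
  constructor
  · rintro ⟨E₁, E₂, h1, h2, h12⟩
    have ha : EQequiv E.1 E₁.1 := eqquot_exact h1.symm
    have hb : EQequiv E₂.1 E'.1 := eqquot_exact h2
    exact eqle_trans (eqle_trans ha.1 h12) hb.1
  · intro h
    exact ⟨E, E', rfl, rfl, h⟩

/-- Term-model solution sets, on the quotient. -/
noncomputable def SolTQ : EQQuot L → Set (ℕ → FOTerm L) :=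
  Quot.lift (fun E : EQSub L => {σ | ESat (TermModel L) σ E.1}) (by
    intro a b hab
    ext σ
    exact ⟨fun hs => hab.1 (TermModel L) termModel_isFEA σ hs,
      fun hs => hab.2 (TermModel L) termModel_isFEA σ hs⟩)

theorem solTQ_mkE (E : EQSub L) :
    SolTQ (mkE E) = {σ | ESat (TermModel L) σ E.1} := rfl

theorem solTQ_mono {a b : EQQuot L} (h : a ≤ b) : SolTQ a ⊆ SolTQ b := by
  obtain ⟨Ea, rfl⟩ := exists_mkE_rep a
  obtain ⟨Eb, rfl⟩ := exists_mkE_rep b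
  intro σ hσ
  exact (mk_le_mk.1 h) (TermModel L) termModel_isFEA σ hσ

theorem solTQ_le {a b : EQQuot L} (h : SolTQ a ⊆ SolTQ b) : a ≤ b := by
  obtain ⟨Ea, rfl⟩ := exists_mkE_rep a
  obtain ⟨Eb, rfl⟩ := exists_mkE_rep b
  exact mk_le_mk.2 (ct Ea.2 Eb.2 h)

theorem bot_least (a : EQQuot L) : mkE ⟨.fal, IsEQ.fal⟩ ≤ a := by
  obtain ⟨E, rfl⟩ := exists_mkE_rep a
  exact mk_le_mk.2 fun M hM h hs => hs.elim

theorem top_greatest (a : EQQuot L) : a ≤ mkE ⟨.tru, IsEQ.tru⟩ := by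
  obtain ⟨E, rfl⟩ := exists_mkE_rep a
  refine mk_le_mk.2 fun M hM h _ => ?_
  show True
  trivial

/-- Every set of classes of EQ-formulas has a least upper bound. -/
theorem exists_isLUB (S : Set (EQQuot L)) : ∃ m : EQQuot L, IsLUB S m := by
  classical
  by_cases hS : ∃ c ∈ S, (SolTQ c).Nonempty
  · obtain ⟨c₀, hc₀S, σc, hσc⟩ := hS
    obtain ⟨E₀, hE₀⟩ := exists_mkE_rep c₀
    have hσc' : ESat (TermModel L) σc E₀.1 := by
      rw [← hE₀] at hσc
      exact hσc
    have hcons : EQcons E₀.1 := ⟨TermModel L, termModel_isFEA, σc, hσc'⟩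
    obtain ⟨G, hGfin, hkey⟩ := key_finiteness E₀.2 hcons
    set U := upperBounds S with hU
    have htop : mkE (⟨.tru, IsEQ.tru⟩ : EQSub L) ∈ U :=
      fun c _ => top_greatest c
    set T := (fun u => (SolTQ u ∩ G).ncard) '' U with hT
    have hTne : T.Nonempty := ⟨_, _, htop, rfl⟩
    obtain ⟨m, hmU, hmrank⟩ := Nat.sInf_mem hTne
    have hc₀U : ∀ u ∈ U, c₀ ≤ u := fun u hu => hu hc₀S
    refine ⟨m, hmU, fun u hu => ?_⟩
    -- m is below every other upper bound u
    obtain ⟨Em, hEm⟩ := exists_mkE_rep m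
    obtain ⟨Eu, hEu⟩ := exists_mkE_rep u
    set meetE : EQSub L := ⟨.and Em.1 Eu.1, IsEQ.and Em.2 Eu.2⟩ with hmeetE
    set meet : EQQuot L := mkE meetE with hmeet
    have hmeet_le_m : meet ≤ m := by
      rw [← hEm]
      exact mk_le_mk.2 fun M hM h hs => hs.1
    have hmeet_le_u : meet ≤ u := by
      rw [← hEu]
      exact mk_le_mk.2 fun M hM h hs => hs.2
    have hmeetU : meet ∈ U := by
      intro c hcS
      have h1 : c ≤ m := hmU hcS
      have h2 : c ≤ u := hu hcS
      obtain ⟨Ec, hEc⟩ := exists_mkE_rep c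
      rw [← hEc, hmeet]
      rw [← hEc, ← hEm] at h1
      rw [← hEc, ← hEu] at h2
      exact mk_le_mk.2 fun M hM h hs =>
        ⟨mk_le_mk.1 h1 M hM h hs, mk_le_mk.1 h2 M hM h hs⟩
    have hc₀meet : c₀ ≤ meet := hc₀U meet hmeetU
    -- apply the key finiteness theorem with F := Em, F' := meetE
    have hsub1 : ∀ σ, ESat (TermModel L) σ E₀.1 → ESat (TermModel L) σ meetE.1 := by
      intro σ hσ
      have : σ ∈ SolTQ c₀ := by rw [← hE₀]; exact hσ
      have := solTQ_mono hc₀meet this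
      rw [hmeet] at this
      exact this
    have hsub2 : ∀ σ, ESat (TermModel L) σ meetE.1 → ESat (TermModel L) σ Em.1 :=
      fun σ hσ => hσ.1
    obtain ⟨γ, hγG, hγF, hγstrict⟩ := hkey Em.1 meetE.1 Em.2 meetE.2 hsub1 hsub2
    by_cases hγ' : ESat (TermModel L) γ meetE.1
    · -- then m ≤ meet, so m = meet ≤ u
      have hmlemeet : m ≤ meet := by
        rw [← hEm, hmeet]
        exact mk_le_mk.2 (ct Em.2 meetE.2 (hγstrict hγ'))
      have : m = meet := le_antisymm hmlemeet hmeet_le_m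
      rw [this]
      exact hmeet_le_u
    · -- impossible: the rank of meet would be smaller than the minimum
      exfalso
      have hγm : γ ∈ SolTQ m ∩ G := by
        refine ⟨?_, hγG⟩
        rw [← hEm]
        exact hγF
      have hγmeet : γ ∉ SolTQ meet ∩ G := by
        rintro ⟨h1, _⟩
        exact hγ' h1
      have hssub : SolTQ meet ∩ G ⊂ SolTQ m ∩ G := by
        refine ⟨Set.inter_subset_inter_left _ (solTQ_mono hmeet_le_m), ?_⟩
        intro hc
        exact hγmeet (hc hγm)
      have hfin : (SolTQ m ∩ G).Finite :=
        hGfin.subset Set.inter_subset_right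
      have hlt : (SolTQ meet ∩ G).ncard < (SolTQ m ∩ G).ncard :=
        Set.ncard_lt_ncard hssub hfin
      have hmem : (SolTQ meet ∩ G).ncard ∈ T := ⟨meet, hmeetU, rfl⟩
      have hle := Nat.sInf_le hmem
      have hmr : (SolTQ m ∩ G).ncard = sInf T := hmrank
      omega
  · -- no consistent member: the least upper bound is ⊥
    push_neg at hS
    refine ⟨mkE (⟨.fal, IsEQ.fal⟩ : EQSub L), fun c hcS => ?_,
      fun u _ => bot_least u⟩
    obtain ⟨Ec, hEc⟩ := exists_mkE_rep c
    rw [← hEc]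
    refine mk_le_mk.2 fun M hM h hs => ?_
    have hcons : EQcons Ec.1 := ⟨M, hM, h, hs⟩
    -- a consistent formula has a term-model solution
    obtain ⟨θ, V, D, _, _, hiff⟩ := char Ec.2 hcons ∅
    have : ESat (TermModel L) (fun x => if x ∈ V then .var x else θ x) Ec.1 := by
      refine (char_toT Ec.1 θ V hiff _).mpr ⟨.var, fun x hx => ?_⟩
      rw [FOTerm.applyT_var]
      exact if_neg hx
    have hne : (SolTQ c).Nonempty := by
      rw [← hEc, solTQ_mkE]
      exact ⟨_, this⟩
    rw [hS c hcS] at hne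
    exact Set.not_nonempty_empty hne

noncomputable instance : SupSet (EQQuot L) := ⟨fun S => (exists_isLUB S).choose⟩

theorem eqquot_isLUB (S : Set (EQQuot L)) : IsLUB S (sSup S) :=
  (exists_isLUB S).choose_spec

/-- The quotient of the set of EQ-formulas by `≈`,
ordered by the relation induced by `≼`, is a complete lattice whose
smallest element is the class of `False` and whose greatest element is the
class of `True`. -/
theorem eqformulas_complete_lattice {L : FOLang} (hc : L.HasConst) :
    ∃ inst : CompleteLattice (EQQuot L),
      (∀ a b : EQQuot L, inst.le a b ↔ EQQuotLe a b) ∧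
      inst.bot = Quot.mk _ (⟨.fal, IsEQ.fal⟩ : EQSub L) ∧
      inst.top = Quot.mk _ (⟨.tru, IsEQ.tru⟩ : EQSub L) := by
  refine ⟨completeLatticeOfSup (EQQuot L) eqquot_isLUB, fun a b => Iff.rfl, ?_, ?_⟩
  · show sSup ∅ = _
    apply le_antisymm
    · exact (eqquot_isLUB ∅).2 fun c hc => absurd hc (Set.notMem_empty c)
    · exact bot_least _
  · show sSup Set.univ = _
    apply le_antisymm
    · exact (eqquot_isLUB Set.univ).2 fun c _ => top_greatest c
    · exact (eqquot_isLUB Set.univ).1 (Set.mem_univ _)
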